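/- arXiv:2306.05378 — 13 statements merged into one kernel-verified Lean document; each statement's English description precedes it below -/
import Mathlib

section
/- Let R be a Noetherian F-finite commutative ring of characteristic p, let q = p^r, and let (M, κ) be an r-Cartier module over R. For each integer j ≥ 1 fix finitely many elements λ_{1,j}, …, λ_{n_j,j} ∈ R such that every element of R can be written as a finite sum ∑_i a_i^{q^j} λ_{i,j} with a_i ∈ R (such families exist by F-finiteness). Then an element m ∈ M is contained in a finitely generated Cartier submodule of M if and only if there exists j ≥ 1 such that for every 1 ≤ i ≤ n_j there exist elements α_0, …, α_{j−1} ∈ R with κ^j(λ_{i,j} • m) + ∑_{k=0}^{j−1} κ^k(α_k • m) = 0. -/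
/-!
Put `N_j = ∑_{k<j} κ^k(R m)`. The displayed relation for `λ_{i,j}` says exactly that
`κ^j(λ_{i,j} m) ∈ N_j`; since the `λ_{i,j}` generate `R` over `R^{q^j}` and
`b • κ^j(x) = κ^j(b^{q^j} x)`, this is equivalent to `κ^j(R m) ⊆ N_j`, i.e. to `N_j` being a
Cartier submodule. Each `N_j` is finitely generated, by `m` and the `κ^k(λ_{i,k} m)`.
Conversely every Cartier submodule containing `m` contains the increasing chain `(N_j)`; if it is
finitely generated over the Noetherian ring `R`, the chain stabilises, and `N_{j+1} = N_j`
gives the relations.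
-/

open Function

theorem Submodule.exists_forall_ge_eq_of_monotone_of_le_fg {R M : Type*} [CommRing R]
    [IsNoetherianRing R] [AddCommGroup M] [Module R M] {N : Submodule R M} (hN : N.FG)
    {f : ℕ → Submodule R M} (hf : Monotone f) (hle : ∀ j, f j ≤ N) :
    ∃ t, ∀ s, t ≤ s → f t = f s := by
  have : IsNoetherian R N := isNoetherian_of_fg_of_noetherian N hN
  obtain ⟨t, ht⟩ := monotone_stabilizes_iff_noetherian.mpr this
    ⟨fun j => (f j).comap N.subtype, fun _ _ h => comap_mono (hf h)⟩
  refine ⟨t, fun s hs => ?_⟩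
  have h : (f t).comap N.subtype = (f s).comap N.subtype := ht s hs
  simpa only [map_comap_subtype, inf_eq_right.mpr (hle _)] using congrArg (map N.subtype) h

section IterateSpan

variable {R M : Type*} [CommRing R] [AddCommGroup M] [Module R M] {q : ℕ} {κ : AddMonoid.End M}

theorem iterate_pow_smul (hκ : ∀ (a : R) (x : M), κ (a ^ q • x) = a • κ x) (k : ℕ) (a : R)
    (x : M) : κ^[k] (a ^ q ^ k • x) = a • κ^[k] x := by
  induction k generalizing a with
  | zero => simp
  | succ k ih => rw [iterate_succ_apply', pow_succ', pow_mul, ih, hκ, iterate_succ_apply']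

variable (R κ) in
def iterateSpan (m : M) (j : ℕ) : Submodule R M :=
  Submodule.span R {x | ∃ k < j, ∃ a : R, κ^[k] (a • m) = x}

variable {m : M} {j : ℕ}

theorem iterate_smul_mem_iterateSpan {k : ℕ} (hk : k < j) (a : R) :
    κ^[k] (a • m) ∈ iterateSpan R κ m j :=
  Submodule.subset_span ⟨k, hk, a, rfl⟩

theorem self_mem_iterateSpan (hj : 0 < j) : m ∈ iterateSpan R κ m j := by
  simpa using iterate_smul_mem_iterateSpan (κ := κ) (m := m) hj (1 : R)

theorem iterateSpan_le_iff {N : Submodule R M} :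
    iterateSpan R κ m j ≤ N ↔ ∀ k < j, ∀ a : R, κ^[k] (a • m) ∈ N := by
  refine Submodule.span_le.trans ⟨fun h k hk a => h ⟨k, hk, a, rfl⟩, ?_⟩
  rintro h _ ⟨k, hk, a, rfl⟩
  exact h k hk a

variable (R κ m) in
theorem iterateSpan_mono : Monotone (iterateSpan R κ m) := fun _ _ h =>
  iterateSpan_le_iff.mpr fun _ hk a => iterate_smul_mem_iterateSpan (hk.trans_le h) a

theorem iterateSpan_le_of_mapsTo {N : Submodule R M} (hN : Set.MapsTo κ N N) (hm : m ∈ N) :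
    iterateSpan R κ m j ≤ N :=
  iterateSpan_le_iff.mpr fun k _ a => hN.iterate k (N.smul_mem a hm)

theorem mem_iterateSpan_iff (hκ : ∀ (a : R) (x : M), κ (a ^ q • x) = a • κ x) {x : M} :
    x ∈ iterateSpan R κ m j ↔ ∃ β : Fin j → R, ∑ k : Fin j, κ^[k] (β k • m) = x := by
  classical
  refine ⟨fun hx => ?_, ?_⟩
  · induction hx using Submodule.span_induction with
    | mem x hx =>
      obtain ⟨k, hk, a, rfl⟩ := hx
      refine ⟨Pi.single ⟨k, hk⟩ a, ?_⟩
      rw [Fintype.sum_eq_single ⟨k, hk⟩ fun l hl => by simp [hl]]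
      simp
    | zero => exact ⟨0, by simp⟩
    | add x y _ _ hx hy =>
      obtain ⟨β, rfl⟩ := hx
      obtain ⟨γ, rfl⟩ := hy
      exact ⟨β + γ, by simp only [Pi.add_apply, add_smul, iterate_map_add, Finset.sum_add_distrib]⟩
    | smul c x _ hx =>
      obtain ⟨β, rfl⟩ := hx
      refine ⟨fun k => c ^ q ^ (k : ℕ) * β k, ?_⟩
      simp only [mul_smul, iterate_pow_smul hκ, Finset.smul_sum]
  · rintro ⟨β, rfl⟩
    exact Submodule.sum_mem _ fun k _ => iterate_smul_mem_iterateSpan k.isLt _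

theorem exists_add_sum_eq_zero_iff_mem_iterateSpan
    (hκ : ∀ (a : R) (x : M), κ (a ^ q • x) = a • κ x) {y : M} :
    (∃ α : Fin j → R, y + ∑ k : Fin j, κ^[k] (α k • m) = 0) ↔ y ∈ iterateSpan R κ m j := by
  rw [mem_iterateSpan_iff hκ, ← (Equiv.neg (Fin j → R)).exists_congr_right]
  refine exists_congr fun α => ?_
  simp only [Equiv.neg_apply, Pi.neg_apply, neg_smul, iterate_map_neg, Finset.sum_neg_distrib,
    add_neg_eq_zero]
  exact eq_comm

theorem mapsTo_iterateSpan (hκ : ∀ (a : R) (x : M), κ (a ^ q • x) = a • κ x)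
    (h : ∀ a : R, κ^[j] (a • m) ∈ iterateSpan R κ m j) :
    Set.MapsTo κ (iterateSpan R κ m j) (iterateSpan R κ m j) := by
  intro x hx
  obtain ⟨β, rfl⟩ := (mem_iterateSpan_iff hκ).mp hx
  rw [map_sum]
  refine Submodule.sum_mem _ fun k _ => ?_
  rw [← iterate_succ_apply' κ]
  rcases Nat.lt_or_eq_of_le k.isLt with hk | hk
  · exact iterate_smul_mem_iterateSpan hk _
  · rw [hk]
    exact h _

theorem iterate_smul_mem_of_generators (hκ : ∀ (a : R) (x : M), κ (a ^ q • x) = a • κ x)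
    {k : ℕ} {ι : Type*} [Fintype ι] {lam : ι → R}
    (hlam : ∀ x : R, ∃ b : ι → R, x = ∑ i, b i ^ q ^ k * lam i) {N : Submodule R M}
    (hN : ∀ i, κ^[k] (lam i • m) ∈ N) (a : R) : κ^[k] (a • m) ∈ N := by
  obtain ⟨b, rfl⟩ := hlam a
  rw [Finset.sum_smul, ← AddMonoid.End.coe_pow, map_sum]
  refine Submodule.sum_mem _ fun i _ => ?_
  rw [AddMonoid.End.coe_pow, mul_smul, iterate_pow_smul hκ]
  exact N.smul_mem _ (hN i)

theorem iterateSpan_fg (hκ : ∀ (a : R) (x : M), κ (a ^ q • x) = a • κ x) {n : ℕ → ℕ}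
    {lam : ∀ k, Fin (n k) → R}
    (hlam : ∀ k, 1 ≤ k → ∀ x : R, ∃ b : Fin (n k) → R, x = ∑ i, b i ^ q ^ k * lam k i)
    (hj : 0 < j) : (iterateSpan R κ m j).FG := by
  let G : Set M :=
    insert m (Set.range fun t : Σ k : Fin j, Fin (n k) => κ^[t.1] (lam t.1 t.2 • m))
  have hG : iterateSpan R κ m j = Submodule.span R G := by
    refine le_antisymm (iterateSpan_le_iff.mpr fun k hk a => ?_) (Submodule.span_le.mpr ?_)
    · rcases Nat.eq_zero_or_pos k with rfl | hk0
      · exact Submodule.smul_mem _ a (Submodule.subset_span (Set.mem_insert m _))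
      · exact iterate_smul_mem_of_generators hκ (hlam k hk0)
          (fun i => Submodule.subset_span (Or.inr ⟨⟨⟨k, hk⟩, i⟩, rfl⟩)) a
    · rintro _ (rfl | ⟨⟨k, i⟩, rfl⟩)
      · exact self_mem_iterateSpan hj
      · exact iterate_smul_mem_iterateSpan k.isLt _
  rw [hG]
  exact Submodule.fg_span ((Set.finite_range _).insert m)

end IterateSpan

theorem stmt0_general (p r : ℕ)
    (R : Type*) [CommRing R] [IsNoetherianRing R]
    (M : Type*) [AddCommGroup M] [Module R M]
    (κ : M → M)
    (hadd : ∀ x y : M, κ (x + y) = κ x + κ y)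
    (hsemi : ∀ (a : R) (x : M), κ (a ^ p ^ r • x) = a • κ x)
    (n : ℕ → ℕ) (lam : ∀ j : ℕ, Fin (n j) → R)
    (hlam : ∀ j : ℕ, 1 ≤ j → ∀ x : R, ∃ a : Fin (n j) → R,
      x = ∑ i, a i ^ (p ^ r) ^ j * lam j i)
    (m : M) :
    (∃ N : Submodule R M, N.FG ∧ (∀ x ∈ N, κ x ∈ N) ∧ m ∈ N) ↔
      ∃ j : ℕ, 1 ≤ j ∧ ∀ i : Fin (n j), ∃ α : Fin j → R,
        κ^[j] (lam j i • m) + ∑ k : Fin j, κ^[(k : ℕ)] (α k • m) = 0 := by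
  let K : AddMonoid.End M := AddMonoidHom.mk' κ hadd
  have hK : ∀ (a : R) (x : M), K (a ^ p ^ r • x) = a • K x := hsemi
  constructor
  · rintro ⟨N, hN, hκN, hm⟩
    obtain ⟨t, ht⟩ := Submodule.exists_forall_ge_eq_of_monotone_of_le_fg hN
      (iterateSpan_mono R K m) fun _ => iterateSpan_le_of_mapsTo hκN hm
    refine ⟨t + 1, le_add_self, fun i => (exists_add_sum_eq_zero_iff_mem_iterateSpan hK).2 ?_⟩
    rw [← ht (t + 1) (by omega), ht (t + 2) (by omega)]
    exact iterate_smul_mem_iterateSpan (by omega) _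
  · rintro ⟨j, hj, hgen⟩
    have hmem : ∀ i, K^[j] (lam j i • m) ∈ iterateSpan R K m j := fun i =>
      (exists_add_sum_eq_zero_iff_mem_iterateSpan hK).1 (hgen i)
    exact ⟨iterateSpan R K m j, iterateSpan_fg hK hlam hj,
      mapsTo_iterateSpan hK (iterate_smul_mem_of_generators hK (hlam j hj) hmem),
      self_mem_iterateSpan hj⟩

/-- Let `R` be a Noetherian `F`-finite commutative ring of characteristic `p`,
`q = p ^ r`, and `(M, κ)` an `r`-Cartier module over `R`.  For each `j ≥ 1` fix elements
`lam j 1, …, lam j (n j)` of `R` such that every element of `R` is a sum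
`∑ i, (a i) ^ (q ^ j) * lam j i`.  Then `m ∈ M` lies in a finitely generated Cartier submodule
iff there is `j ≥ 1` such that for every `i` there are `α₀, …, α_{j-1} ∈ R` with
`κ^[j] (lam j i • m) + ∑ k, κ^[k] (α k • m) = 0`. -/
theorem stmt0 (p r : ℕ) (hp : p.Prime) (hr : 1 ≤ r)
    (R : Type*) [CommRing R] [CharP R p] [IsNoetherianRing R]
    (hFF : ∃ s : Finset R, ∀ x : R, ∃ a : R → R, x = ∑ i ∈ s, a i ^ p * i)
    (M : Type*) [AddCommGroup M] [Module R M]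
    (κ : M → M)
    (hadd : ∀ x y : M, κ (x + y) = κ x + κ y)
    (hsemi : ∀ (a : R) (x : M), κ (a ^ p ^ r • x) = a • κ x)
    (n : ℕ → ℕ) (lam : ∀ j : ℕ, Fin (n j) → R)
    (hlam : ∀ j : ℕ, 1 ≤ j → ∀ x : R, ∃ a : Fin (n j) → R,
      x = ∑ i, a i ^ (p ^ r) ^ j * lam j i)
    (m : M) :
    (∃ N : Submodule R M, N.FG ∧ (∀ x ∈ N, κ x ∈ N) ∧ m ∈ N) ↔
      ∃ j : ℕ, 1 ≤ j ∧ ∀ i : Fin (n j), ∃ α : Fin j → R,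
        κ^[j] (lam j i • m) + ∑ k : Fin j, κ^[(k : ℕ)] (α k • m) = 0 :=
  stmt0_general p r R M κ hadd hsemi n lam hlam m
end

section
/- Let R be a Noetherian F-finite commutative ring of characteristic p, let q = p^r, and let (M, κ) be an r-Cartier module over R such that κ^n = 0 for some n ≥ 0 (i.e., (M, κ) is nilpotent). Then (M, κ) is ind-coherent: every element of M lies in a finitely generated Cartier submodule. -/
/-!
Since `R` is `F`-finite, it is also finitely generated as a module over itself via
`a • x = a ^ q * x`, say by a finite set `T`. For `m ∈ M` let `G₀ = {m}` and
`Gⱼ₊₁ = {κ (t • g) | t ∈ T, g ∈ Gⱼ}`. By semilinearity `Gⱼ` lies in the image of `κ^[j]`, so it is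
`⊆ {0}` once `κ^[j] = 0`; hence the union of the `Gⱼ` is finite. Its span contains `m`, and it is
stable under `κ` because `κ (b ^ q * t • g) = b • κ (t • g)` and every scalar is a sum of such
`b ^ q * t`.
-/

open Set

section FrobeniusSpan

variable {R : Type*} [CommRing R]

/-- `frobeniusSpan q T = ⊤` says that `T` generates `R` as a module over itself
via `a • x = a ^ q * x`. -/
def frobeniusSpan (q : ℕ) (T : Set R) : AddSubmonoid R :=
  AddSubmonoid.closure (image2 (fun b t => b ^ q * t) univ T)

lemma pow_mul_mem_frobeniusSpan {q : ℕ} {T : Set R} (b : R) {t : R} (ht : t ∈ T) :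
    b ^ q * t ∈ frobeniusSpan q T :=
  AddSubmonoid.subset_closure (mem_image2_of_mem (mem_univ b) ht)

lemma frobeniusSpan_one_singleton_one : frobeniusSpan 1 ({1} : Set R) = ⊤ :=
  eq_top_iff.2 fun b _ => by
    simpa using pow_mul_mem_frobeniusSpan (q := 1) b (mem_singleton (1 : R))

lemma frobeniusSpan_eq_top_of_forall_eq_sum {q : ℕ} (s : Finset R)
    (hs : ∀ x : R, ∃ a : R → R, x = ∑ i ∈ s, a i ^ q * i) : frobeniusSpan q (s : Set R) = ⊤ :=
  eq_top_iff.2 fun x _ => by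
    obtain ⟨a, rfl⟩ := hs x
    exact AddSubmonoid.sum_mem _ fun i hi => pow_mul_mem_frobeniusSpan (a i) hi

lemma frobeniusSpan_pow_succ_eq_top {p : ℕ} [Fact p.Prime] [CharP R p] {S T : Set R} {j : ℕ}
    (hS : frobeniusSpan p S = ⊤) (hT : frobeniusSpan (p ^ j) T = ⊤) :
    frobeniusSpan (p ^ (j + 1)) (image2 (fun u s => u ^ p * s) T S) = ⊤ := by
  set F := frobeniusSpan (p ^ (j + 1)) (image2 (fun u s => u ^ p * s) T S)
  suffices h : ∀ s ∈ S, ∀ a : R, a ^ p * s ∈ F by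
    refine eq_top_iff.2 (hS ▸ AddSubmonoid.closure_le.2 ?_)
    rintro _ ⟨a, -, s, hs, rfl⟩
    exact h s hs a
  intro s hs a
  let f : R →+ R := (AddMonoidHom.mulRight s).comp (frobenius R p).toAddMonoidHom
  suffices hT' : frobeniusSpan (p ^ j) T ≤ F.comap f from hT' (hT ▸ AddSubmonoid.mem_top a)
  refine AddSubmonoid.closure_le.2 ?_
  rintro _ ⟨b, -, u, hu, rfl⟩
  have h : f (b ^ p ^ j * u) = b ^ p ^ (j + 1) * (u ^ p * s) := by
    simp only [f, AddMonoidHom.comp_apply, RingHom.toAddMonoidHom_eq_coe, AddMonoidHom.coe_coe,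
      frobenius_def, AddMonoidHom.coe_mulRight]
    ring
  change f (b ^ p ^ j * u) ∈ F
  exact h ▸ pow_mul_mem_frobeniusSpan (T := image2 (fun u s => u ^ p * s) T S) b
    (mem_image2_of_mem hu hs)

lemma exists_finite_frobeniusSpan_pow_eq_top {p : ℕ} [Fact p.Prime] [CharP R p] {S : Set R}
    (hSfin : S.Finite) (hS : frobeniusSpan p S = ⊤) (j : ℕ) :
    ∃ T : Set R, T.Finite ∧ frobeniusSpan (p ^ j) T = ⊤ := by
  induction j with
  | zero => exact ⟨{1}, finite_singleton 1, by simpa using frobeniusSpan_one_singleton_one⟩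
  | succ j ih =>
    obtain ⟨T, hTfin, hT⟩ := ih
    exact ⟨_, hTfin.image2 _ hSfin, frobeniusSpan_pow_succ_eq_top hS hT⟩

end FrobeniusSpan

section CartierModule

variable {R M : Type*} [CommRing R] [AddCommGroup M] [Module R M] {q : ℕ} {κ : M →+ M}

lemma iterate_pow_pow_smul (hκ : ∀ (a : R) (x : M), κ (a ^ q • x) = a • κ x) (j : ℕ) (a : R)
    (x : M) : κ^[j] (a ^ q ^ j • x) = a • κ^[j] x := by
  induction j generalizing a x with
  | zero => simp
  | succ j ih =>
    rw [Function.iterate_succ_apply, pow_succ, pow_mul, hκ, ih, Function.iterate_succ_apply]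

lemma map_mem_span_of_forall_smul_mem (hκ : ∀ (a : R) (x : M), κ (a ^ q • x) = a • κ x)
    {T : Set R} (hT : frobeniusSpan q T = ⊤) {S : Set M}
    (hS : ∀ t ∈ T, ∀ g ∈ S, κ (t • g) ∈ Submodule.span R S) {x : M}
    (hx : x ∈ Submodule.span R S) : κ x ∈ Submodule.span R S := by
  set N := Submodule.span R S
  suffices h : ∀ c : R, κ (c • x) ∈ N by simpa using h 1
  induction hx using Submodule.span_induction with
  | mem g hg =>
    intro c
    suffices hT' :
        frobeniusSpan q T ≤ N.toAddSubmonoid.comap (κ.comp ((smulAddHom R M).flip g)) from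
      hT' (hT ▸ AddSubmonoid.mem_top c)
    refine AddSubmonoid.closure_le.2 ?_
    rintro _ ⟨b, -, t, ht, rfl⟩
    change κ ((b ^ q * t) • g) ∈ N
    rw [mul_smul, hκ]
    exact N.smul_mem b (hS t ht g hg)
  | zero => simp
  | add y z _ _ hy hz =>
    exact fun c => by simpa only [smul_add, map_add] using N.add_mem (hy c) (hz c)
  | smul a y _ hy => exact fun c => by simpa only [smul_smul] using hy (c * a)

variable (κ) in
def cartierOrbit (T : Set R) (m : M) : ℕ → Set M
  | 0 => {m}
  | j + 1 => image2 (fun t g => κ (t • g)) T (cartierOrbit T m j)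

lemma cartierOrbit_finite {T : Set R} (hT : T.Finite) (m : M) (j : ℕ) :
    (cartierOrbit κ T m j).Finite := by
  induction j with
  | zero => exact finite_singleton m
  | succ j ih => exact hT.image2 _ ih

lemma cartierOrbit_subset_range_iterate (hκ : ∀ (a : R) (x : M), κ (a ^ q • x) = a • κ x)
    (T : Set R) (m : M) (j : ℕ) : cartierOrbit κ T m j ⊆ range κ^[j] := by
  induction j with
  | zero => simp [cartierOrbit]
  | succ j ih =>
    rintro _ ⟨t, -, _, hg, rfl⟩
    obtain ⟨y, rfl⟩ := ih hg
    exact ⟨t ^ q ^ j • y, by rw [Function.iterate_succ_apply', iterate_pow_pow_smul hκ]⟩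

theorem exists_fg_cartier_submodule_of_iterate_eq_zero
    (hκ : ∀ (a : R) (x : M), κ (a ^ q • x) = a • κ x) {T : Set R} (hTfin : T.Finite)
    (hT : frobeniusSpan q T = ⊤) {n : ℕ} (hn : ∀ x : M, κ^[n] x = 0) (m : M) :
    ∃ N : Submodule R M, N.FG ∧ (∀ x ∈ N, κ x ∈ N) ∧ m ∈ N := by
  set S := ⋃ j, cartierOrbit κ T m j
  have hS : S ⊆ (⋃ j ∈ Iio n, cartierOrbit κ T m j) ∪ {0} := by
    refine iUnion_subset fun j g hg => ?_
    rcases lt_or_ge j n with hj | hj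
    · exact Or.inl (mem_biUnion hj hg)
    · obtain ⟨y, rfl⟩ := cartierOrbit_subset_range_iterate hκ T m j hg
      obtain ⟨i, rfl⟩ := Nat.exists_eq_add_of_le' hj
      exact Or.inr (by rw [Function.iterate_add_apply, hn, iterate_map_zero, mem_singleton_iff])
  have hSfin : S.Finite :=
    (((finite_Iio n).biUnion fun j _ => cartierOrbit_finite hTfin m j).union
      (finite_singleton 0)).subset hS
  refine ⟨Submodule.span R S, Submodule.fg_span hSfin,
    fun x => map_mem_span_of_forall_smul_mem hκ hT fun t ht g hg => ?_,
    Submodule.subset_span (mem_iUnion_of_mem 0 rfl)⟩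
  obtain ⟨j, hj⟩ := mem_iUnion.1 hg
  exact Submodule.subset_span (mem_iUnion_of_mem (j + 1) (mem_image2_of_mem ht hj))

end CartierModule

theorem stmt1_general (p r : ℕ) (hp : p.Prime)
    (R : Type*) [CommRing R] [CharP R p]
    (hFF : ∃ s : Finset R, ∀ x : R, ∃ a : R → R, x = ∑ i ∈ s, a i ^ p * i)
    (M : Type*) [AddCommGroup M] [Module R M]
    (κ : M → M)
    (hadd : ∀ x y : M, κ (x + y) = κ x + κ y)
    (hsemi : ∀ (a : R) (x : M), κ (a ^ p ^ r • x) = a • κ x)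
    (hnil : ∃ n : ℕ, ∀ x : M, κ^[n] x = 0) :
    ∀ m : M, ∃ N : Submodule R M, N.FG ∧ (∀ x ∈ N, κ x ∈ N) ∧ m ∈ N := by
  have : Fact p.Prime := ⟨hp⟩
  obtain ⟨s, hs⟩ := hFF
  obtain ⟨n, hn⟩ := hnil
  obtain ⟨T, hTfin, hT⟩ := exists_finite_frobeniusSpan_pow_eq_top s.finite_toSet
    (frobeniusSpan_eq_top_of_forall_eq_sum s hs) r
  exact exists_fg_cartier_submodule_of_iterate_eq_zero (κ := AddMonoidHom.mk' κ hadd) hsemi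
    hTfin hT hn

/-- Over a Noetherian `F`-finite commutative ring `R` of characteristic `p`,
a nilpotent `r`-Cartier module `(M, κ)` (some iterate of `κ` vanishes) is ind-coherent:
every element of `M` lies in a finitely generated Cartier submodule. -/
theorem stmt1 (p r : ℕ) (hp : p.Prime) (hr : 1 ≤ r)
    (R : Type*) [CommRing R] [CharP R p] [IsNoetherianRing R]
    (hFF : ∃ s : Finset R, ∀ x : R, ∃ a : R → R, x = ∑ i ∈ s, a i ^ p * i)
    (M : Type*) [AddCommGroup M] [Module R M]
    (κ : M → M)
    (hadd : ∀ x y : M, κ (x + y) = κ x + κ y)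
    (hsemi : ∀ (a : R) (x : M), κ (a ^ p ^ r • x) = a • κ x)
    (hnil : ∃ n : ℕ, ∀ x : M, κ^[n] x = 0) :
    ∀ m : M, ∃ N : Submodule R M, N.FG ∧ (∀ x ∈ N, κ x ∈ N) ∧ m ∈ N :=
  stmt1_general p r hp R hFF M κ hadd hsemi hnil
end

section
/- Let R be a Noetherian F-finite commutative ring of characteristic p, let q = p^r, let (N, κ) be an r-Cartier module over R, and let A ⊆ N be a Cartier submodule. If (A, κ|_A) is ind-coherent and the quotient N/A, with the induced r-Cartier structure, is ind-coherent, then (N, κ) is ind-coherent. (The class of ind-coherent Cartier modules is closed under extensions.) -/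
/-!
Lift a finite generating set of a `κ`-stable finitely generated `Q ∋ x mod A` in `N ⧸ A` to a
finite `G ⊆ N`. Since `R` is finite over its subring of `p ^ r`-th powers (iterate
`F`-finiteness), semilinearity puts `κ (span G)` inside the span of the finitely many elements
`κ (g • y)`, with `g` running over generators of `R` over that subring and `y ∈ G`. These, and
`x`, lie in `span G + A`; their `A`-components lie in a finitely generated `κ`-stable `B ≤ A`,
and `span G ⊔ B` is the required submodule.
-/

open Set Submodule

universe u

theorem exists_generators_pow_char_pow {R : Type u} [CommRing R] {p : ℕ} [Fact p.Prime]
    [CharP R p] {s : Finset R} (hs : ∀ x : R, ∃ a : R → R, x = ∑ i ∈ s, a i ^ p * i) (k : ℕ) :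
    ∃ (ι : Type u) (_ : Fintype ι) (g : ι → R),
      ∀ c : R, ∃ a : ι → R, c = ∑ i, a i ^ p ^ k * g i := by
  induction k with
  | zero => exact ⟨PUnit, inferInstance, fun _ => 1, fun c => ⟨fun _ => c, by simp⟩⟩
  | succ k ih =>
    obtain ⟨ι, _, g, hg⟩ := ih
    refine ⟨ι × s, inferInstance, fun ij => (ij.2 : R) ^ p ^ k * g ij.1, fun c => ?_⟩
    obtain ⟨a, rfl⟩ := hg c
    choose b hb using fun i => hs (a i)
    refine ⟨fun ij => b ij.1 ij.2, ?_⟩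
    rw [Fintype.sum_prod_type]
    refine Finset.sum_congr rfl fun i _ => ?_
    rw [hb i, ← Finset.sum_coe_sort s, sum_pow_char_pow, Finset.sum_mul]
    refine Finset.sum_congr rfl fun j _ => ?_
    rw [pow_succ', pow_mul, mul_pow, mul_assoc]

theorem Submodule.FG.exists_finite_map_span_eq {R M M' : Type*} [Ring R] [AddCommGroup M]
    [Module R M] [AddCommGroup M'] [Module R M'] {f : M →ₗ[R] M'} (hf : Function.Surjective f)
    {Q : Submodule R M'} (hQ : Q.FG) : ∃ G : Set M, G.Finite ∧ (span R G).map f = Q := by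
  obtain ⟨T, rfl⟩ := hQ
  have hT : ∃ T' ⊆ f '' univ, T'.Finite ∧ span R T' = span R T :=
    ⟨T, by simp [hf.range_eq], T.finite_toSet, rfl⟩
  obtain ⟨G, -, hG, hGT⟩ := exists_subset_image_finite_and.1 hT
  exact ⟨G, hG, by rw [map_span, hGT]⟩

section Cartier

variable {R N : Type*} [CommRing R] [AddCommGroup N] [Module R N] (κ : N →+ N)

theorem AddMonoidHom.apply_mem_of_mem_sup {P P' S : Submodule R N} (h : ∀ y ∈ P, κ y ∈ S)
    (h' : ∀ y ∈ P', κ y ∈ S) : ∀ y ∈ P ⊔ P', κ y ∈ S := by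
  intro y hy
  obtain ⟨u, hu, v, hv, rfl⟩ := mem_sup.1 hy
  rw [map_add]
  exact add_mem (h u hu) (h' v hv)

theorem AddMonoidHom.apply_mem_span_image2_of_mem_span {q : ℕ} {ι : Type*} [Fintype ι]
    {g : ι → R} (hg : ∀ c : R, ∃ a : ι → R, c = ∑ i, a i ^ q * g i)
    (hκ : ∀ (a : R) (x : N), κ (a ^ q • x) = a • κ x) {G : Set N} {u : N}
    (hu : u ∈ span R G) : κ u ∈ span R (image2 (fun c y => κ (c • y)) (Set.range g) G) := by
  set S := span R (image2 (fun c y => κ (c • y)) (Set.range g) G)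
  have smul_mem : ∀ y ∈ G, ∀ c : R, κ (c • y) ∈ S := by
    intro y hy c
    obtain ⟨a, rfl⟩ := hg c
    simp only [Finset.sum_smul, map_sum, mul_smul, hκ]
    exact sum_mem fun i _ => S.smul_mem _ (subset_span (mem_image2_of_mem (mem_range_self i) hy))
  suffices ∀ c : R, κ (c • u) ∈ S by simpa using this 1
  induction hu using span_induction with
  | mem y hy => exact smul_mem y hy
  | zero => simp
  | add u v _ _ hu hv => intro c; rw [smul_add, map_add]; exact add_mem (hu c) (hv c)
  | smul d u _ hu => intro c; rw [smul_smul]; exact hu (c * d)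

theorem exists_fg_le_subset_sup {A : Submodule R N}
    (hA : ∀ a ∈ A, ∃ B : Submodule R N, B ≤ A ∧ B.FG ∧ (∀ x ∈ B, κ x ∈ B) ∧ a ∈ B)
    (P : Submodule R N) {F : Set N} (hF : F.Finite) (hFA : F ⊆ (P ⊔ A : Submodule R N)) :
    ∃ B : Submodule R N, B ≤ A ∧ B.FG ∧ (∀ x ∈ B, κ x ∈ B) ∧ F ⊆ (P ⊔ B : Submodule R N) := by
  induction F, hF using Set.Finite.induction_on with
  | empty => exact ⟨⊥, bot_le, fg_bot, by simp, empty_subset _⟩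
  | @insert y F _ _ ih =>
    obtain ⟨B, hBA, hBfg, hBκ, hFB⟩ := ih ((subset_insert y F).trans hFA)
    obtain ⟨u, hu, a, ha, rfl⟩ := mem_sup.1 (hFA (mem_insert y F))
    obtain ⟨B', hB'A, hB'fg, hB'κ, haB'⟩ := hA a ha
    refine ⟨B ⊔ B', sup_le hBA hB'A, hBfg.sup hB'fg,
      κ.apply_mem_of_mem_sup (fun x hx => mem_sup_left (hBκ x hx))
        (fun x hx => mem_sup_right (hB'κ x hx)), insert_subset ?_ ?_⟩
    · exact add_mem (mem_sup_left hu) (mem_sup_right (mem_sup_right haB'))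
    · exact hFB.trans (sup_le_sup_left le_sup_left P)

end Cartier

theorem stmt2_general (p r : ℕ) (hp : p.Prime)
    (R : Type*) [CommRing R] [CharP R p]
    (hFF : ∃ s : Finset R, ∀ x : R, ∃ a : R → R, x = ∑ i ∈ s, a i ^ p * i)
    (N : Type*) [AddCommGroup N] [Module R N]
    (κ : N → N)
    (hadd : ∀ x y : N, κ (x + y) = κ x + κ y)
    (hsemi : ∀ (a : R) (x : N), κ (a ^ p ^ r • x) = a • κ x)
    (A : Submodule R N)
    -- `A` with the induced Cartier structure is ind-coherent:
    (hAind : ∀ a ∈ A, ∃ P : Submodule R N, P ≤ A ∧ P.FG ∧ (∀ x ∈ P, κ x ∈ P) ∧ a ∈ P)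
    -- the induced Cartier structure on the quotient `N / A`:
    (κq : (N ⧸ A) → (N ⧸ A))
    (hκq : ∀ x : N, κq (A.mkQ x) = A.mkQ (κ x))
    -- `N / A` with the induced Cartier structure is ind-coherent:
    (hQind : ∀ z : N ⧸ A, ∃ Q : Submodule R (N ⧸ A), Q.FG ∧ (∀ y ∈ Q, κq y ∈ Q) ∧ z ∈ Q) :
    ∀ x : N, ∃ P : Submodule R N, P.FG ∧ (∀ y ∈ P, κ y ∈ P) ∧ x ∈ P := by
  have : Fact p.Prime := ⟨hp⟩
  let κ' : N →+ N := AddMonoidHom.mk' κ hadd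
  obtain ⟨s, hs⟩ := hFF
  obtain ⟨ι, _, g, hg⟩ := exists_generators_pow_char_pow hs r
  intro x
  obtain ⟨Q, hQfg, hQκ, hxQ⟩ := hQind (A.mkQ x)
  obtain ⟨G, hGfin, hGQ⟩ := hQfg.exists_finite_map_span_eq A.mkQ_surjective
  have mem_sup_of_mkQ_mem : ∀ y, A.mkQ y ∈ Q → y ∈ span R G ⊔ A := fun y hy => by
    rwa [sup_comm, ← comap_map_mkQ, hGQ]
  set K := image2 (fun c y => κ (c • y)) (Set.range g) G
  have hK : K ⊆ (span R G ⊔ A : Submodule R N) := by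
    rintro _ ⟨c, -, y, hy, rfl⟩
    refine mem_sup_of_mkQ_mem _ ?_
    rw [← hκq, map_smul]
    exact hQκ _ (Q.smul_mem c (hGQ ▸ mem_map_of_mem (subset_span hy)))
  obtain ⟨B, -, hBfg, hBκ, hKB⟩ := exists_fg_le_subset_sup κ' hAind (span R G)
    (((finite_range g).image2 _ hGfin).insert x) (insert_subset (mem_sup_of_mkQ_mem x hxQ) hK)
  refine ⟨span R G ⊔ B, (fg_span hGfin).sup hBfg, κ'.apply_mem_of_mem_sup ?_
    (fun y hy => mem_sup_right (hBκ y hy)), hKB (mem_insert x K)⟩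
  exact fun u hu => span_le.2 ((subset_insert x K).trans hKB)
    (κ'.apply_mem_span_image2_of_mem_span hg hsemi hu)

/-- Over a Noetherian `F`-finite commutative ring `R` of characteristic `p`,
ind-coherent `r`-Cartier modules are closed under extensions: if `A ⊆ N` is a Cartier
submodule such that `A` (with the induced structure) and `N/A` (with the induced structure)
are ind-coherent, then `N` is ind-coherent. -/
theorem stmt2 (p r : ℕ) (hp : p.Prime) (hr : 1 ≤ r)
    (R : Type*) [CommRing R] [CharP R p] [IsNoetherianRing R]
    (hFF : ∃ s : Finset R, ∀ x : R, ∃ a : R → R, x = ∑ i ∈ s, a i ^ p * i)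
    (N : Type*) [AddCommGroup N] [Module R N]
    (κ : N → N)
    (hadd : ∀ x y : N, κ (x + y) = κ x + κ y)
    (hsemi : ∀ (a : R) (x : N), κ (a ^ p ^ r • x) = a • κ x)
    (A : Submodule R N) (hA : ∀ x ∈ A, κ x ∈ A)
    -- `A` with the induced Cartier structure is ind-coherent:
    (hAind : ∀ a ∈ A, ∃ P : Submodule R N, P ≤ A ∧ P.FG ∧ (∀ x ∈ P, κ x ∈ P) ∧ a ∈ P)
    -- the induced Cartier structure on the quotient `N / A`:
    (κq : (N ⧸ A) → (N ⧸ A))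
    (hκq : ∀ x : N, κq (A.mkQ x) = A.mkQ (κ x))
    -- `N / A` with the induced Cartier structure is ind-coherent:
    (hQind : ∀ z : N ⧸ A, ∃ Q : Submodule R (N ⧸ A), Q.FG ∧ (∀ y ∈ Q, κq y ∈ Q) ∧ z ∈ Q) :
    ∀ x : N, ∃ P : Submodule R N, P.FG ∧ (∀ y ∈ P, κ y ∈ P) ∧ x ∈ P :=
  stmt2_general p r hp R hFF N κ hadd hsemi A hAind κq hκq hQind
end

section
/- Let R be a Noetherian F-finite integral domain of characteristic p, let L = Frac(R) be its fraction field, let q = p^r, and let n ≥ 1. Then for every r-Cartier structure κ on the R-module L^n (i.e., every additive map κ : L^n → L^n with κ(a^q • v) = a • κ(v) for all a ∈ R), the Cartier module (L^n, κ) is ind-coherent: every element of L^n lies in a finitely generated R-submodule that is stable under κ. -/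
/-!
The lattice `Λ = R^n ⊆ L^n` is finitely generated, and since `R` is finite over `R^q`
(iterated F-finiteness), `κ Λ` lies in a finitely generated submodule. Clearing denominators
gives a nonzero `c ∈ R` with `c • κ Λ ⊆ Λ` and `c • v ∈ Λ`. Then `N = c^{-q} Λ` contains `v` and
is `κ`-stable, because `κ (c^{-q} Λ) = c⁻¹ κ Λ ⊆ c^{-2} Λ ⊆ c^{-q} Λ` as `q ≥ 2`.
-/

open Submodule

section FrobeniusFinite

universe u

variable {p : ℕ} {R : Type u} [CommRing R] [ExpChar R p]

theorem exists_fintype_sum_pow_pow_mul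
    (hFF : ∃ s : Finset R, ∀ x : R, ∃ a : R → R, x = ∑ i ∈ s, a i ^ p * i) (r : ℕ) :
    ∃ (ι : Type u) (_ : Fintype ι) (g : ι → R), ∀ x : R, ∃ a : ι → R,
      x = ∑ j, a j ^ p ^ r * g j := by
  induction r with
  | zero => exact ⟨PUnit, inferInstance, fun _ => 1, fun x => ⟨fun _ => x, by simp⟩⟩
  | succ r ih =>
    obtain ⟨s, hs⟩ := hFF
    obtain ⟨ι, _, g, hg⟩ := ih
    refine ⟨s × ι, inferInstance, fun y => g y.2 ^ p * y.1, fun x => ?_⟩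
    obtain ⟨b, hb⟩ := hs x
    choose a ha using fun i : s => hg (b i)
    refine ⟨fun y => a y.1 y.2, ?_⟩
    calc x = ∑ i : s, b i ^ p * i := by rw [hb, Finset.sum_coe_sort s fun i => b i ^ p * i]
      _ = ∑ i : s, ∑ j, a i j ^ p ^ (r + 1) * (g j ^ p * i) := by
        refine Finset.sum_congr rfl fun i _ => ?_
        rw [ha i, sum_pow_char, Finset.sum_mul]
        refine Finset.sum_congr rfl fun j _ => ?_
        rw [mul_pow, ← pow_mul, ← pow_succ, mul_assoc]
      _ = _ := by rw [Fintype.sum_prod_type]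

end FrobeniusFinite

section Cartier

variable {R M : Type*} [CommRing R] [AddCommGroup M] [Module R M] {q : ℕ}

theorem AddMonoidHom.mem_span_image2_of_mem_span {ι : Type*} [Fintype ι] {g : ι → R}
    (hg : ∀ x : R, ∃ a : ι → R, x = ∑ j, a j ^ q * g j) (κ : M →+ M)
    (hκ : ∀ (a : R) (x : M), κ (a ^ q • x) = a • κ x) {S : Set M} {x : M}
    (hx : x ∈ span R S) :
    κ x ∈ span R (Set.image2 (fun j s => κ (g j • s)) Set.univ S) := by
  suffices ∀ b : R, κ (b • x) ∈ span R (Set.image2 (fun j s => κ (g j • s)) Set.univ S) by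
    simpa using this 1
  induction hx using Submodule.span_induction with
  | mem y hy =>
    intro b
    obtain ⟨a, rfl⟩ := hg b
    rw [Finset.sum_smul, map_sum]
    refine sum_mem fun j _ => ?_
    rw [mul_smul, hκ]
    exact smul_mem _ _ (subset_span (Set.mem_image2_of_mem (Set.mem_univ j) hy))
  | zero => simp
  | add y z _ _ hy hz =>
    intro b
    rw [smul_add, map_add]
    exact add_mem (hy b) (hz b)
  | smul a y _ hy =>
    intro b
    rw [smul_smul]
    exact hy _

theorem AddMonoidHom.exists_fg_forall_mem_of_fg {ι : Type*} [Fintype ι] {g : ι → R}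
    (hg : ∀ x : R, ∃ a : ι → R, x = ∑ j, a j ^ q * g j) (κ : M →+ M)
    (hκ : ∀ (a : R) (x : M), κ (a ^ q • x) = a • κ x) {Λ : Submodule R M} (hΛ : Λ.FG) :
    ∃ T : Submodule R M, T.FG ∧ ∀ x ∈ Λ, κ x ∈ T := by
  obtain ⟨s, rfl⟩ := hΛ
  exact ⟨_, fg_span (Set.finite_univ.image2 _ s.finite_toSet),
    fun x hx => κ.mem_span_image2_of_mem_span hg hκ hx⟩

theorem smul_pow_apply_mem_of_smul_pow_mem {κ : M → M} (hκ : ∀ (a : R) (x : M), κ (a ^ q • x) = a • κ x)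
    (hq : 2 ≤ q) {Λ : Submodule R M} {c : R} (hc : ∀ x ∈ Λ, c • κ x ∈ Λ) {x : M}
    (hx : c ^ q • x ∈ Λ) : c ^ q • κ x ∈ Λ := by
  obtain ⟨k, rfl⟩ : ∃ k, q = k + 2 := ⟨q - 2, by omega⟩
  have : c ^ (k + 2) • κ x = c ^ k • c • κ (c ^ (k + 2) • x) := by
    rw [hκ, smul_smul, smul_smul, ← pow_succ, ← pow_succ]
  rw [this]
  exact Λ.smul_mem _ (hc _ hx)

end Cartier

section IntegralLattice

variable (R L : Type*) [CommRing R] [CommRing L] [Algebra R L] (σ : Type*)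

def integralLattice : Submodule R (σ → L) :=
  LinearMap.range ((Algebra.linearMap R L).compLeft σ)

variable {R L σ}

theorem mem_integralLattice {x : σ → L} :
    x ∈ integralLattice R L σ ↔ ∀ i, IsLocalization.IsInteger R (x i) := by
  constructor
  · rintro ⟨c, rfl⟩ i
    exact ⟨c i, rfl⟩
  · intro h
    choose c hc using h
    exact ⟨c, funext hc⟩

theorem integralLattice_fg [Finite σ] : (integralLattice R L σ).FG := by
  rw [integralLattice, LinearMap.range_eq_map]
  exact Module.Finite.fg_top.map _

variable [IsFractionRing R L]

theorem exists_smul_mem_integralLattice_of_fg [Finite σ] {T : Submodule R (σ → L)} (hT : T.FG) :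
    ∃ c ∈ nonZeroDivisors R, ∀ x ∈ T, c • x ∈ integralLattice R L σ := by
  obtain ⟨s, rfl⟩ := hT
  have := Fintype.ofFinite σ
  obtain ⟨c, hc⟩ := IsLocalization.exist_integer_multiples (nonZeroDivisors R)
    (Finset.univ : Finset (s × σ)) fun y => (y.1 : σ → L) y.2
  refine ⟨c, c.2, fun x hx => ?_⟩
  suffices span R s ≤ (integralLattice R L σ).comap ((c : R) • LinearMap.id) from this hx
  refine span_le.mpr fun y hy => mem_integralLattice.mpr fun i => ?_
  exact hc (⟨y, hy⟩, i) (Finset.mem_univ _)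

end IntegralLattice

theorem comap_smul_fg_of_mem_nonZeroDivisors {R L M : Type*} [CommRing R] [CommRing L]
    [Algebra R L] [IsFractionRing R L] [AddCommGroup M] [Module L M] [Module R M]
    [IsScalarTower R L M] {c : R} (hc : c ∈ nonZeroDivisors R) {Λ : Submodule R M}
    (hΛ : Λ.FG) : (Λ.comap (c • LinearMap.id)).FG := by
  have hbij : Function.Bijective (c • LinearMap.id : M →ₗ[R] M) := by
    convert (IsLocalization.map_units L (⟨c, hc⟩ : nonZeroDivisors R)).smul_bijective (β := M)
    simp [algebraMap_smul]
  let e := LinearEquiv.ofBijective _ hbij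
  rw [show Λ.comap (c • LinearMap.id) = Λ.comap (e : M →ₗ[R] M) from rfl,
    comap_equiv_eq_map_symm]
  exact hΛ.map _

theorem stmt3_general (p r : ℕ) (hp : p.Prime) (hr : 1 ≤ r)
    (R : Type*) [CommRing R] [CharP R p]
    (hFF : ∃ s : Finset R, ∀ x : R, ∃ a : R → R, x = ∑ i ∈ s, a i ^ p * i)
    (L : Type*) [Field L] [Algebra R L] [IsFractionRing R L]
    (n : ℕ)
    (κ : (Fin n → L) → (Fin n → L))
    (hadd : ∀ x y : Fin n → L, κ (x + y) = κ x + κ y)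
    (hsemi : ∀ (a : R) (v : Fin n → L), κ (a ^ p ^ r • v) = a • κ v) :
    ∀ v : Fin n → L, ∃ N : Submodule R (Fin n → L), N.FG ∧ (∀ x ∈ N, κ x ∈ N) ∧ v ∈ N := by
  intro v
  have : Fact p.Prime := ⟨hp⟩
  have hq : 2 ≤ p ^ r := Nat.one_lt_pow (by omega) hp.one_lt
  obtain ⟨ι, _, g, hg⟩ := exists_fintype_sum_pow_pow_mul hFF r
  set Λ := integralLattice R L (Fin n)
  obtain ⟨T, hT, hκT⟩ :=
    (AddMonoidHom.mk' κ hadd).exists_fg_forall_mem_of_fg hg hsemi integralLattice_fg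
  obtain ⟨c, hc, hcΛ⟩ := exists_smul_mem_integralLattice_of_fg (hT.sup (fg_span_singleton v))
  refine ⟨Λ.comap (c ^ p ^ r • LinearMap.id),
    comap_smul_fg_of_mem_nonZeroDivisors (L := L) (pow_mem hc _) integralLattice_fg,
    fun x hx => smul_pow_apply_mem_of_smul_pow_mem hsemi hq
      (fun y hy => hcΛ _ (mem_sup_left (hκT y hy))) hx, ?_⟩
  have hv : c ^ p ^ r • v = c ^ (p ^ r - 1) • c • v := by
    rw [smul_smul, ← pow_succ, Nat.sub_add_cancel (by omega)]
  show c ^ p ^ r • v ∈ Λ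
  rw [hv]
  exact Λ.smul_mem _ (hcΛ v (mem_sup_right (mem_span_singleton_self v)))

/-- Let `R` be a Noetherian `F`-finite integral domain of characteristic `p`,
`L = Frac R`, and `n ≥ 1`.  Every `r`-Cartier structure `κ` on the `R`-module `L^n` makes
`(L^n, κ)` an ind-coherent Cartier module: each vector lies in a finitely generated
`R`-submodule stable under `κ`. -/
theorem stmt3 (p r : ℕ) (hp : p.Prime) (hr : 1 ≤ r)
    (R : Type*) [CommRing R] [IsDomain R] [CharP R p] [IsNoetherianRing R]
    (hFF : ∃ s : Finset R, ∀ x : R, ∃ a : R → R, x = ∑ i ∈ s, a i ^ p * i)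
    (L : Type*) [Field L] [Algebra R L] [IsFractionRing R L]
    (n : ℕ) (hn : 1 ≤ n)
    (κ : (Fin n → L) → (Fin n → L))
    (hadd : ∀ x y : Fin n → L, κ (x + y) = κ x + κ y)
    (hsemi : ∀ (a : R) (v : Fin n → L), κ (a ^ p ^ r • v) = a • κ v) :
    ∀ v : Fin n → L, ∃ N : Submodule R (Fin n → L), N.FG ∧ (∀ x ∈ N, κ x ∈ N) ∧ v ∈ N :=
  stmt3_general p r hp hr R hFF L n κ hadd hsemi
end

section
/- Let R be a commutative ring of characteristic p, let q = p^r, let J be an injective R-module, let M ⊆ J be an R-submodule, and let κ : M → M be an r-Cartier structure on M (an additive map with κ(a^q • x) = a • κ(x) for all a ∈ R, x ∈ M). Then there exists an r-Cartier structure κ' : J → J on J (an additive map with κ'(a^q • y) = a • κ'(y) for all a ∈ R, y ∈ J) such that κ'(x) = κ(x) for every x ∈ M; i.e., any Cartier structure on a submodule of an injective module extends to a Cartier structure on the whole injective module. -/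
/-!
An additive map `g` with `g (a ^ q • x) = a • g x` is the same thing as an `R`-linear map out of
the Frobenius twist of its source, i.e. the source with `a` acting as `a ^ q`. Twisting the
inclusion `M ⊆ J` keeps it injective, so injectivity of `J` extends the linear map attached to `κ`
from the twisted `M` to the twisted `J`, and that extension is the required Cartier structure.
-/

/-- The `R`-module `N` regarded as an `S`-module through `φ : S →+* R`. -/
def RestrictAlong {R S : Type*} [Semiring R] [Semiring S] (_φ : S →+* R) (N : Type*) : Type _ := N

namespace RestrictAlong

variable {R S : Type*} [Ring R] [Ring S] (φ : S →+* R)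
variable {M N I : Type*} [AddCommGroup M] [Module R M] [AddCommGroup N] [Module R N]
variable [AddCommGroup I] [Module S I]

instance : AddCommGroup (RestrictAlong φ N) := inferInstanceAs (AddCommGroup N)

instance : Module S (RestrictAlong φ N) := Module.compHom N φ

def of : N ≃+ RestrictAlong φ N := AddEquiv.refl N

def map (f : M →ₗ[R] N) : RestrictAlong φ M →ₗ[S] RestrictAlong φ N where
  toFun x := of φ (f ((of φ).symm x))
  map_add' _ _ := f.map_add _ _
  map_smul' _ _ := f.map_smul _ _

theorem map_injective {f : M →ₗ[R] N} (hf : Function.Injective f) :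
    Function.Injective (map φ f) :=
  (of φ).injective.comp (hf.comp (of φ).symm.injective)

def lift (g : M →+ I) (hg : ∀ (a : S) (x : M), g (φ a • x) = a • g x) :
    RestrictAlong φ M →ₗ[S] I where
  toFun x := g ((of φ).symm x)
  map_add' _ _ := g.map_add _ _
  map_smul' a x := hg a x

end RestrictAlong

universe v

open RestrictAlong in
theorem exists_addMonoidHom_extension_of_injective {R S : Type*} [Ring R] [Ring S] (φ : S →+* R)
    {N I : Type v} [AddCommGroup N] [Module R N] [AddCommGroup I] [Module S I]
    [Module.Injective S I] (M : Submodule R N) (g : M →+ I)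
    (hg : ∀ (a : S) (x : M), g (φ a • x) = a • g x) :
    ∃ h : N →+ I, (∀ (a : S) (y : N), h (φ a • y) = a • h y) ∧ ∀ x : M, h x = g x := by
  obtain ⟨h, hh⟩ := Module.Injective.out (map φ M.subtype)
    (map_injective φ M.injective_subtype) (lift φ g hg)
  exact ⟨h.toAddMonoidHom.comp (of φ).toAddMonoidHom, fun a y => h.map_smul a (of φ y),
    fun x => hh (of φ x)⟩

theorem stmt5_general (p r : ℕ) (hp : p.Prime)
    (R : Type*) [CommRing R] [CharP R p]
    (J : Type*) [AddCommGroup J] [Module R J] [Module.Injective R J]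
    (M : Submodule R J)
    (κ : M → M)
    (hadd : ∀ x y : M, κ (x + y) = κ x + κ y)
    (hsemi : ∀ (a : R) (x : M), κ (a ^ p ^ r • x) = a • κ x) :
    ∃ κ' : J → J,
      (∀ y z : J, κ' (y + z) = κ' y + κ' z) ∧
      (∀ (a : R) (y : J), κ' (a ^ p ^ r • y) = a • κ' y) ∧
      (∀ x : M, κ' (x : J) = ((κ x : M) : J)) := by
  have : ExpChar R p := ExpChar.prime hp
  let g : M →+ J := M.subtype.toAddMonoidHom.comp (AddMonoidHom.mk' κ hadd)
  have hg : ∀ (a : R) (x : M), g (iterateFrobenius R p r a • x) = a • g x := fun a x => by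
    simp [g, iterateFrobenius_def, hsemi]
  obtain ⟨h, h_smul, h_ext⟩ := exists_addMonoidHom_extension_of_injective _ M g hg
  exact ⟨h, h.map_add, fun a y => by simpa only [iterateFrobenius_def] using h_smul a y, h_ext⟩

/-- Let `R` be a commutative ring of characteristic `p`, `J` an injective
`R`-module, `M ⊆ J` a submodule and `κ` an `r`-Cartier structure on `M`.  Then `κ` extends
to an `r`-Cartier structure `κ'` on all of `J`. -/
theorem stmt5 (p r : ℕ) (hp : p.Prime) (hr : 1 ≤ r)
    (R : Type*) [CommRing R] [CharP R p]
    (J : Type*) [AddCommGroup J] [Module R J] [Module.Injective R J]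
    (M : Submodule R J)
    (κ : M → M)
    (hadd : ∀ x y : M, κ (x + y) = κ x + κ y)
    (hsemi : ∀ (a : R) (x : M), κ (a ^ p ^ r • x) = a • κ x) :
    ∃ κ' : J → J,
      (∀ y z : J, κ' (y + z) = κ' y + κ' z) ∧
      (∀ (a : R) (y : J), κ' (a ^ p ^ r • y) = a • κ' y) ∧
      (∀ x : M, κ' (x : J) = ((κ x : M) : J)) :=
  stmt5_general p r hp R J M κ hadd hsemi
end

section
/- Let R be a Noetherian F-finite commutative ring of characteristic p, let q = p^r, let 𝔭 ⊂ R be a prime ideal, and let K = Frac(R/𝔭), regarded as an R-module via R → R/𝔭 → K. Let E be an R-module such that every element of E is annihilated by some power of 𝔭, and such that for every i ≥ 0 the R-module Ann_E(𝔭^{i+1})/Ann_E(𝔭^i) is isomorphic, as an R-module, to a finite direct sum of copies of K (where Ann_E(𝔭^i) = {x ∈ E : 𝔭^i x = 0}). Then for every n ≥ 1 and every r-Cartier structure κ on the R-module E^n, the Cartier module (E^n, κ) is ind-coherent. -/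
/-!
Let `q = p ^ r ≥ 2`. By `F`-finiteness, `R` is generated over `R ^ q` by a finite set `G`, so
`κ (a • v) = ∑ cᵢ • κ (gᵢ • v)` whenever `a = ∑ cᵢ ^ q * gᵢ`: the values of `κ` on `R • v` lie
in the span of the finitely many `κ (g • v)`. Since `(𝔭 ^ (i + 1)) ^ q ⊆ 𝔭 ^ (i + 2)`, `κ` maps
`Ann(𝔭 ^ (i + 2))` into `Ann(𝔭 ^ (i + 1))`, so by induction on the torsion level it suffices to
treat `Ann(𝔭) ≅ K ^ N`. There `κ (t⁻¹ ^ q • w) = t⁻¹ • κ w` for `t ∈ R ∖ 𝔭`, and a common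
denominator `t` of `v` and of the `κ (g • eⱼ)` makes the `R`-lattice `t⁻² Rᴺ` stable under `κ`.
-/

open Submodule

section Frobenius

variable {R : Type*} [CommRing R]

/-- `G` generates `R` as a module over its subring of `q`-th powers. -/
def SpansOverPowers (q : ℕ) (G : Set R) : Prop :=
  ∀ x : R, x ∈ AddSubmonoid.closure {y | ∃ c : R, ∃ g ∈ G, c ^ q * g = y}

theorem spansOverPowers_of_forall_eq_sum {q : ℕ} (s : Finset R)
    (hs : ∀ x : R, ∃ a : R → R, x = ∑ i ∈ s, a i ^ q * i) : SpansOverPowers q (s : Set R) := by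
  intro x
  obtain ⟨a, rfl⟩ := hs x
  exact AddSubmonoid.sum_mem _ fun i hi => AddSubmonoid.subset_closure ⟨a i, i, hi, rfl⟩

theorem spansOverPowers_one : SpansOverPowers 1 ({1} : Set R) :=
  fun x => AddSubmonoid.subset_closure ⟨x, 1, rfl, by simp⟩

/-- `c ↦ c ^ p ^ e` is additive, so `c = ∑ dᵢ ^ q * hᵢ` gives
`c ^ p ^ e * g = ∑ dᵢ ^ (q * p ^ e) * (hᵢ ^ p ^ e * g)`. -/
theorem SpansOverPowers.trans {p : ℕ} [Fact p.Prime] [CharP R p] {e q : ℕ} {G H : Set R}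
    (hG : SpansOverPowers (p ^ e) G) (hH : SpansOverPowers q H) :
    SpansOverPowers (q * p ^ e) (Set.image2 (fun g h => h ^ p ^ e * g) G H) := by
  intro x
  refine AddSubmonoid.closure_induction (fun y hy => ?_) (zero_mem _)
    (fun _ _ _ _ => add_mem) (hG x)
  obtain ⟨c, g, hg, rfl⟩ := hy
  let f : R →+ R := (AddMonoidHom.mulRight g).comp (iterateFrobenius R p e).toAddMonoidHom
  change f c ∈ _
  refine AddSubmonoid.closure_induction (fun y hy => ?_) (by rw [map_zero]; exact zero_mem _)
    (fun _ _ _ _ hy hz => by rw [map_add]; exact add_mem hy hz) (hH c)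
  obtain ⟨d, h, hh, rfl⟩ := hy
  refine AddSubmonoid.subset_closure ⟨d, h ^ p ^ e * g, ⟨g, hg, h, hh, rfl⟩, ?_⟩
  simp only [f, AddMonoidHom.comp_apply, RingHom.toAddMonoidHom_eq_coe, AddMonoidHom.coe_coe,
    iterateFrobenius_def, AddMonoidHom.coe_mulRight]
  ring

theorem exists_finite_spansOverPowers_pow {p : ℕ} [Fact p.Prime] [CharP R p] {H : Set R}
    (hHfin : H.Finite) (hH : SpansOverPowers p H) (e : ℕ) :
    ∃ G : Set R, G.Finite ∧ SpansOverPowers (p ^ e) G := by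
  induction e with
  | zero => exact ⟨{1}, Set.finite_singleton 1, by simpa using spansOverPowers_one⟩
  | succ e ih =>
    obtain ⟨G, hGfin, hG⟩ := ih
    exact ⟨_, hGfin.image2 _ hHfin, by simpa [pow_succ'] using hG.trans hH⟩

end Frobenius

section Cartier

variable (R : Type*) {M : Type*} [CommRing R] [AddCommGroup M] [Module R M]

/-- `κ` is ind-coherent iff this holds for every `v`. -/
def MemFGCartierSubmodule (κ : M → M) (v : M) : Prop :=
  ∃ N : Submodule R M, N.FG ∧ (∀ x ∈ N, κ x ∈ N) ∧ v ∈ N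

variable {R} {q : ℕ} {G : Set R} (κ : M →+ M)

theorem MemFGCartierSubmodule.map {V : Type*} [AddCommGroup V] [Module R V] {κ' : V → V}
    (f : V →ₗ[R] M) (hf : ∀ y, κ (f y) = f (κ' y)) {y : V}
    (h : MemFGCartierSubmodule R κ' y) : MemFGCartierSubmodule R κ (f y) := by
  obtain ⟨N, hfg, hN, hy⟩ := h
  refine ⟨N.map f, hfg.map f, ?_, mem_map_of_mem hy⟩
  rintro _ ⟨z, hz, rfl⟩
  exact hf z ▸ mem_map_of_mem (hN z hz)

theorem exists_fg_stable_superset {s : Set M} (hs : s.Finite)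
    (h : ∀ v ∈ s, MemFGCartierSubmodule R κ v) :
    ∃ N : Submodule R M, N.FG ∧ (∀ x ∈ N, κ x ∈ N) ∧ s ⊆ N := by
  induction s, hs using Set.Finite.induction_on with
  | empty => exact ⟨⊥, fg_bot, by simp, Set.empty_subset _⟩
  | @insert a s _ _ ih =>
    obtain ⟨N₁, hfg₁, hN₁, hs₁⟩ := ih fun v hv => h v (Set.mem_insert_of_mem a hv)
    obtain ⟨N₂, hfg₂, hN₂, ha⟩ := h a (Set.mem_insert a s)
    refine ⟨N₁ ⊔ N₂, hfg₁.sup hfg₂, fun x hx => ?_,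
      Set.insert_subset (mem_sup_right ha) (hs₁.trans (SetLike.coe_subset_coe.2 le_sup_left))⟩
    obtain ⟨y, hy, z, hz, rfl⟩ := mem_sup.1 hx
    rw [map_add]
    exact add_mem (mem_sup_left (hN₁ y hy)) (mem_sup_right (hN₂ z hz))

theorem map_smul_mem_span_image
    (hκ : ∀ (a : R) (x : M), κ (a ^ q • x) = a • κ x) (hG : SpansOverPowers q G) (a : R) (x : M) :
    κ (a • x) ∈ span R ((fun g => κ (g • x)) '' G) := by
  refine AddSubmonoid.closure_induction (fun y hy => ?_) (by simp)
    (fun _ _ _ _ hy hz => by rw [add_smul, map_add]; exact add_mem hy hz) (hG a)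
  obtain ⟨c, g, hg, rfl⟩ := hy
  rw [mul_smul, hκ]
  exact smul_mem _ c (subset_span ⟨g, hg, rfl⟩)

theorem map_mem_span_image2
    (hκ : ∀ (a : R) (x : M), κ (a ^ q • x) = a • κ x) (hG : SpansOverPowers q G)
    {s : Set M} {w : M} (hw : w ∈ span R s) :
    κ w ∈ span R (Set.image2 (fun g x => κ (g • x)) G s) := by
  suffices ∀ a : R, κ (a • w) ∈ span R (Set.image2 (fun g x => κ (g • x)) G s) by
    simpa using this 1
  induction hw using Submodule.span_induction with
  | mem x hx =>
    exact fun a => span_mono (by rintro _ ⟨g, hg, rfl⟩; exact ⟨g, hg, x, hx, rfl⟩)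
      (map_smul_mem_span_image κ hκ hG a x)
  | zero => simp
  | add x y _ _ hx hy => exact fun a => by rw [smul_add, map_add]; exact add_mem (hx a) (hy a)
  | smul b x _ hx => exact fun a => by rw [smul_smul]; exact hx (a * b)

theorem memFGCartierSubmodule_of_forall_map_smul
    (hκ : ∀ (a : R) (x : M), κ (a ^ q • x) = a • κ x) (hGfin : G.Finite)
    (hG : SpansOverPowers q G) (v : M) (h : ∀ g ∈ G, MemFGCartierSubmodule R κ (κ (g • v))) :
    MemFGCartierSubmodule R κ v := by
  obtain ⟨N, hfg, hN, hsub⟩ := exists_fg_stable_superset κ (hGfin.image fun g => κ (g • v))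
    (by rintro _ ⟨g, hg, rfl⟩; exact h g hg)
  refine ⟨(R ∙ v) ⊔ N, (fg_span_singleton v).sup hfg, fun x hx => ?_,
    mem_sup_left (mem_span_singleton_self v)⟩
  obtain ⟨y, hy, z, hz, rfl⟩ := mem_sup.1 hx
  have hκy := map_mem_span_image2 κ hκ hG hy
  rw [Set.image2_singleton_right] at hκy
  rw [map_add]
  exact add_mem (mem_sup_right (span_le.2 hsub hκy)) (mem_sup_right (hN z hz))

theorem map_mem_torsionBySet_pow
    (hκ : ∀ (a : R) (x : M), κ (a ^ q • x) = a • κ x) {I : Ideal R} {j k : ℕ} (hkj : k ≤ j * q)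
    {x : M} (hx : x ∈ torsionBySet R M ↑(I ^ k)) : κ x ∈ torsionBySet R M ↑(I ^ j) := by
  rw [mem_torsionBySet_iff] at hx ⊢
  rintro ⟨a, ha⟩
  have haq : a ^ q ∈ I ^ k :=
    Ideal.pow_le_pow_right hkj (by rw [pow_mul]; exact Ideal.pow_mem_pow ha q)
  rw [← hκ, hx ⟨_, haq⟩, map_zero]

/-- Since `q ≥ 2`, `κ` lowers the `I`-torsion level, so induction on it reduces everything to
elements killed by `I`. -/
theorem memFGCartierSubmodule_of_mem_torsionBySet_pow
    (hκ : ∀ (a : R) (x : M), κ (a ^ q • x) = a • κ x) (hq : 2 ≤ q) (hGfin : G.Finite)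
    (hG : SpansOverPowers q G) {I : Ideal R}
    (hbase : ∀ x ∈ torsionBySet R M I, MemFGCartierSubmodule R κ x) (i : ℕ) :
    ∀ x ∈ torsionBySet R M ↑(I ^ (i + 1)), MemFGCartierSubmodule R κ x := by
  induction i with
  | zero => simpa using hbase
  | succ i ih =>
    refine fun x hx => memFGCartierSubmodule_of_forall_map_smul κ hκ hGfin hG x fun g _ =>
      ih _ (map_mem_torsionBySet_pow κ hκ ?_ (smul_mem _ g hx))
    nlinarith

end Cartier

section Lattice

variable {R K V : Type*} [CommRing R] [Field K] [Algebra R K]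
  [AddCommGroup V] [Module K V] [Module R V] [IsScalarTower R K V]

theorem exists_common_denominator (L : Submodule R V) {s : Set V} (hs : s.Finite)
    (h : ∀ v ∈ s, ∃ c : R, algebraMap R K c ≠ 0 ∧ algebraMap R K c • v ∈ L) :
    ∃ c : R, algebraMap R K c ≠ 0 ∧ ∀ v ∈ s, algebraMap R K c • v ∈ L := by
  induction s, hs using Set.Finite.induction_on with
  | empty => exact ⟨1, by simp, by simp⟩
  | @insert a s _ _ ih =>
    obtain ⟨c, hc, hcs⟩ := ih fun v hv => h v (Set.mem_insert_of_mem a hv)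
    obtain ⟨d, hd, hda⟩ := h a (Set.mem_insert a s)
    have hmul : ∀ {c d : R} {v : V}, algebraMap R K d • v ∈ L →
        algebraMap R K (c * d) • v ∈ L := fun hv => by
      rw [map_mul, mul_smul, algebraMap_smul]; exact L.smul_mem _ hv
    refine ⟨c * d, by simp [hc, hd], Set.forall_mem_insert.2 ⟨hmul hda, fun v hv => ?_⟩⟩
    rw [mul_comm]
    exact hmul (hcs v hv)

theorem exists_algebraMap_smul_mem_span_basis
    (hfrac : ∀ x : K, ∃ b c : R, algebraMap R K c ≠ 0 ∧ algebraMap R K c * x = algebraMap R K b)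
    {ι : Type*} [Finite ι] (b : Module.Basis ι K V)
    (v : V) : ∃ c : R, algebraMap R K c ≠ 0 ∧ algebraMap R K c • v ∈ span R (Set.range b) := by
  have : Fintype ι := Fintype.ofFinite ι
  obtain ⟨c, hc, hcv⟩ := exists_common_denominator (span R (Set.range b))
    (Set.finite_range fun i => b.repr v i • b i) (by
      rintro _ ⟨i, rfl⟩
      obtain ⟨d, c, hc, hdc⟩ := hfrac (b.repr v i)
      refine ⟨c, hc, ?_⟩
      rw [smul_smul, hdc, algebraMap_smul]
      exact smul_mem _ d (subset_span ⟨i, rfl⟩))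
  refine ⟨c, hc, ?_⟩
  rw [← b.sum_repr v, Finset.smul_sum]
  exact sum_mem fun i _ => hcv _ ⟨i, rfl⟩

/-- Field case. With `t` a common denominator of `v` and of the finitely many `κ (g • x)`
(`x` a generator of `L`), `κ` maps `L` into `t⁻¹ L`; since `κ (t⁻¹ ^ q • w) = t⁻¹ • κ w` and
`q ≥ 2`, the lattice `t⁻² L` is then `κ`-stable. -/
theorem memFGCartierSubmodule_of_lattice {q : ℕ} {G : Set R} (κ : V →+ V)
    (hκ : ∀ (a : R) (x : V), κ (a ^ q • x) = a • κ x) (hq : 2 ≤ q) (hGfin : G.Finite)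
    (hG : SpansOverPowers q G) (L : Submodule R V) (hLfg : L.FG)
    (hL : ∀ v, ∃ c : R, algebraMap R K c ≠ 0 ∧ algebraMap R K c • v ∈ L) (v : V) :
    MemFGCartierSubmodule R κ v := by
  obtain ⟨m, rfl⟩ : ∃ m, q = m + 2 := ⟨q - 2, by omega⟩
  obtain ⟨s, rfl⟩ := hLfg
  obtain ⟨c, hc, hcs⟩ := exists_common_denominator (K := K) (span R ↑s)
    (s := insert v (Set.image2 (fun g x => κ (g • x)) G s))
    ((hGfin.image2 _ s.finite_toSet).insert v) (fun w _ => hL w)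
  set t := algebraMap R K c
  have hκt : ∀ w ∈ span R (s : Set V), t • κ w ∈ span R (s : Set V) := by
    intro w hw
    have hsub : Set.image2 (fun g x => κ (g • x)) G ↑s ⊆
        (span R (s : Set V)).comap (DistribSMul.toLinearMap R V t) :=
      fun y hy => hcs y (Set.mem_insert_of_mem v hy)
    exact span_le.2 hsub (map_mem_span_image2 κ hκ hG hw)
  have hκinv : ∀ w, κ (t⁻¹ ^ (m + 2) • w) = t⁻¹ • κ w := fun w => by
    have := hκ c (t⁻¹ ^ (m + 2) • w)
    rw [← algebraMap_smul K, smul_smul, map_pow, ← mul_pow, mul_inv_cancel₀ hc, one_pow,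
      one_smul, ← algebraMap_smul K] at this
    rw [this, smul_smul, inv_mul_cancel₀ hc, one_smul]
  have hscale : ∀ z : V, t⁻¹ ^ 2 • z = t⁻¹ ^ (m + 2) • (c ^ m • z) := fun z => by
    rw [← algebraMap_smul K (c ^ m) z, smul_smul, map_pow, pow_add, mul_right_comm, ← mul_pow,
      inv_mul_cancel₀ hc, one_pow, one_mul]
  refine ⟨(span R (s : Set V)).map (DistribSMul.toLinearMap R V (t⁻¹ ^ 2)),
    (fg_span s.finite_toSet).map _, ?_, ?_⟩
  · rintro _ ⟨z, hz, rfl⟩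
    refine ⟨t • κ (c ^ m • z), hκt _ (smul_mem _ _ hz), ?_⟩
    change t⁻¹ ^ 2 • t • κ (c ^ m • z) = κ (t⁻¹ ^ 2 • z)
    rw [hscale z, hκinv, smul_smul, pow_two, mul_assoc, inv_mul_cancel₀ hc, mul_one]
  · refine ⟨c • t • v, smul_mem _ c (hcs v (Set.mem_insert v _)), ?_⟩
    change t⁻¹ ^ 2 • c • t • v = v
    rw [← algebraMap_smul K c (t • v), smul_smul, smul_smul]
    change (t⁻¹ ^ 2 * t * t) • v = v
    rw [show t⁻¹ ^ 2 * t * t = 1 by field_simp, one_smul]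

end Lattice

theorem memFGCartierSubmodule_of_linearEquiv {R K V M : Type*} [CommRing R] [Field K]
    [Algebra R K] [AddCommGroup V] [Module K V] [Module R V] [IsScalarTower R K V]
    [FiniteDimensional K V] [AddCommGroup M] [Module R M] {q : ℕ} {G : Set R} (κ : M →+ M)
    (hκ : ∀ (a : R) (x : M), κ (a ^ q • x) = a • κ x) (hq : 2 ≤ q) (hGfin : G.Finite)
    (hG : SpansOverPowers q G)
    (hfrac : ∀ x : K, ∃ b c : R, algebraMap R K c ≠ 0 ∧ algebraMap R K c * x = algebraMap R K b)
    {P : Submodule R M} (hP : ∀ x ∈ P, κ x ∈ P) (e : P ≃ₗ[R] V) :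
    ∀ x ∈ P, MemFGCartierSubmodule R κ x := by
  let κP : P →+ P :=
    (κ.comp P.subtype.toAddMonoidHom).codRestrict P.toAddSubmonoid fun x => hP x x.2
  let κV : V →+ V := e.toAddMonoidHom.comp (κP.comp e.symm.toAddMonoidHom)
  have hκP : ∀ (a : R) (z : P), κP (a ^ q • z) = a • κP z := fun a z => Subtype.ext (hκ a z)
  have hκV : ∀ (a : R) (y : V), κV (a ^ q • y) = a • κV y := fun a y => by
    change e (κP (e.symm (a ^ q • y))) = a • e (κP (e.symm y))
    rw [map_smul, hκP, map_smul]
  have hf : ∀ y, κ (P.subtype (e.symm y)) = P.subtype (e.symm (κV y)) := fun y => by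
    change _ = ((e.symm (e (κP (e.symm y))) : P) : M)
    rw [e.symm_apply_apply]
    rfl
  intro x hx
  simpa using (memFGCartierSubmodule_of_lattice κV hκV hq hGfin hG _
    (fg_span (Set.finite_range (Module.finBasis K V)))
    (exists_algebraMap_smul_mem_span_basis hfrac _) (e ⟨x, hx⟩)).map κ
    (P.subtype ∘ₗ e.symm.toLinearMap) hf

theorem exists_algebraMap_mul_eq_of_isFractionRing {R A K : Type*} [CommRing R] [CommRing A]
    [Field K] [Algebra R A] [Algebra A K] [Algebra R K] [IsScalarTower R A K]
    [IsFractionRing A K] (hA : Function.Surjective (algebraMap R A)) (x : K) :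
    ∃ b c : R, algebraMap R K c ≠ 0 ∧ algebraMap R K c * x = algebraMap R K b := by
  obtain ⟨⟨a, d⟩, had⟩ := IsLocalization.surj (nonZeroDivisors A) x
  obtain ⟨b, rfl⟩ := hA a
  obtain ⟨c, hc⟩ := hA d
  refine ⟨b, c, ?_, ?_⟩ <;> rw [IsScalarTower.algebraMap_apply R A K, hc]
  · exact (IsLocalization.map_units K d).ne_zero
  · rw [mul_comm, had, ← IsScalarTower.algebraMap_apply]

section Pi

variable {R E : Type*} [CommRing R] [AddCommGroup E] [Module R E] {ι : Type*} {s : Set R}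

theorem mem_torsionBySet_pi_iff {v : ι → E} :
    v ∈ torsionBySet R (ι → E) s ↔ ∀ i, v i ∈ torsionBySet R E s := by
  simp only [mem_torsionBySet_iff, funext_iff, Pi.smul_apply, Pi.zero_apply]
  exact forall_comm

variable (R E ι s) in
def torsionBySetPiEquiv : torsionBySet R (ι → E) s ≃ₗ[R] (ι → torsionBySet R E s) where
  toFun x i := ⟨x.1 i, mem_torsionBySet_pi_iff.1 x.2 i⟩
  invFun y := ⟨fun i => y i, mem_torsionBySet_pi_iff.2 fun i => (y i).2⟩
  map_add' _ _ := rfl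
  map_smul' _ _ := rfl
  left_inv _ := rfl
  right_inv _ := rfl

end Pi

theorem stmt6_general (p r : ℕ) (hp : p.Prime) (hr : 1 ≤ r)
    (R : Type*) [CommRing R] [CharP R p]
    (hFF : ∃ s : Finset R, ∀ x : R, ∃ a : R → R, x = ∑ i ∈ s, a i ^ p * i)
    (𝔭 : Ideal R)
    (K : Type*) [Field K] [Algebra (R ⧸ 𝔭) K] [IsFractionRing (R ⧸ 𝔭) K]
    [Algebra R K] [IsScalarTower R (R ⧸ 𝔭) K]
    (E : Type*) [AddCommGroup E] [Module R E]
    -- every element of `E` is annihilated by a power of `𝔭`: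
    (htors : ∀ x : E, ∃ i : ℕ, x ∈ Submodule.torsionBySet R E ((𝔭 ^ i : Ideal R) : Set R))
    -- each layer `Ann_E(𝔭^{i+1}) / Ann_E(𝔭^i)` is a finite direct sum of copies of `K`:
    (hlayers : ∀ i : ℕ, ∃ m : ℕ, Nonempty
      ((↥(Submodule.torsionBySet R E ((𝔭 ^ (i + 1) : Ideal R) : Set R)) ⧸
          (Submodule.comap
            (Submodule.torsionBySet R E ((𝔭 ^ (i + 1) : Ideal R) : Set R)).subtype
            (Submodule.torsionBySet R E ((𝔭 ^ i : Ideal R) : Set R))))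
        ≃ₗ[R] (Fin m → K)))
    (n : ℕ)
    (κ : (Fin n → E) → (Fin n → E))
    (hadd : ∀ x y : Fin n → E, κ (x + y) = κ x + κ y)
    (hsemi : ∀ (a : R) (v : Fin n → E), κ (a ^ p ^ r • v) = a • κ v) :
    ∀ v : Fin n → E, ∃ N : Submodule R (Fin n → E), N.FG ∧ (∀ x ∈ N, κ x ∈ N) ∧ v ∈ N := by
  have : Fact p.Prime := ⟨hp⟩
  have hq : 2 ≤ p ^ r := hp.two_le.trans (Nat.le_self_pow (by omega) p)
  obtain ⟨s, hs⟩ := hFF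
  obtain ⟨G, hGfin, hG⟩ := exists_finite_spansOverPowers_pow s.finite_toSet
    (spansOverPowers_of_forall_eq_sum s hs) r
  let κ' : (Fin n → E) →+ (Fin n → E) := AddMonoidHom.mk' κ hadd
  obtain ⟨m, ⟨e⟩⟩ := hlayers 0
  rw [pow_zero, Ideal.one_eq_top, Submodule.top_coe, torsionBySet_univ, comap_bot, ker_subtype,
    zero_add, pow_one] at e
  have hP : ∀ x ∈ torsionBySet R (Fin n → E) 𝔭, κ' x ∈ torsionBySet R (Fin n → E) 𝔭 :=
    fun x hx => by
      simpa using map_mem_torsionBySet_pow κ' hsemi (I := 𝔭) (j := 1) (k := 1) (by omega)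
        (by simpa using hx)
  have hbase := memFGCartierSubmodule_of_linearEquiv κ' hsemi hq hGfin hG
    (exists_algebraMap_mul_eq_of_isFractionRing (A := R ⧸ 𝔭) (K := K)
      Ideal.Quotient.mk_surjective) hP
    ((torsionBySetPiEquiv R E (Fin n) 𝔭).trans
      (LinearEquiv.piCongrRight fun _ => (quotEquivOfEqBot ⊥ rfl).symm.trans e))
  intro v
  choose i hi using fun j => htors (v j)
  refine memFGCartierSubmodule_of_mem_torsionBySet_pow κ' hsemi hq hGfin hG hbase
    (Finset.univ.sup i) v (mem_torsionBySet_pi_iff.2 fun j =>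
      torsionBySet_le_torsionBySet_pow _ _ ?_ 𝔭 (hi j))
  exact (Finset.le_sup (Finset.mem_univ j)).trans (Nat.le_succ _)

/-- Let `R` be a Noetherian `F`-finite commutative ring of characteristic
`p`, `𝔭 ⊂ R` a prime and `K = Frac (R/𝔭)` viewed as an `R`-module.  Let `E` be an
`R`-module such that every element is killed by a power of `𝔭` and all the layers
`Ann_E(𝔭^{i+1})/Ann_E(𝔭^i)` are finite direct sums of copies of `K`.  Then for every
`n ≥ 1`, every `r`-Cartier structure on `E^n` is ind-coherent. -/
theorem stmt6 (p r : ℕ) (hp : p.Prime) (hr : 1 ≤ r)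
    (R : Type*) [CommRing R] [CharP R p] [IsNoetherianRing R]
    (hFF : ∃ s : Finset R, ∀ x : R, ∃ a : R → R, x = ∑ i ∈ s, a i ^ p * i)
    (𝔭 : Ideal R) [𝔭.IsPrime]
    (K : Type*) [Field K] [Algebra (R ⧸ 𝔭) K] [IsFractionRing (R ⧸ 𝔭) K]
    [Algebra R K] [IsScalarTower R (R ⧸ 𝔭) K]
    (E : Type*) [AddCommGroup E] [Module R E]
    -- every element of `E` is annihilated by a power of `𝔭`:
    (htors : ∀ x : E, ∃ i : ℕ, x ∈ Submodule.torsionBySet R E ((𝔭 ^ i : Ideal R) : Set R))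
    -- each layer `Ann_E(𝔭^{i+1}) / Ann_E(𝔭^i)` is a finite direct sum of copies of `K`:
    (hlayers : ∀ i : ℕ, ∃ m : ℕ, Nonempty
      ((↥(Submodule.torsionBySet R E ((𝔭 ^ (i + 1) : Ideal R) : Set R)) ⧸
          (Submodule.comap
            (Submodule.torsionBySet R E ((𝔭 ^ (i + 1) : Ideal R) : Set R)).subtype
            (Submodule.torsionBySet R E ((𝔭 ^ i : Ideal R) : Set R))))
        ≃ₗ[R] (Fin m → K)))
    (n : ℕ) (hn : 1 ≤ n)
    (κ : (Fin n → E) → (Fin n → E))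
    (hadd : ∀ x y : Fin n → E, κ (x + y) = κ x + κ y)
    (hsemi : ∀ (a : R) (v : Fin n → E), κ (a ^ p ^ r • v) = a • κ v) :
    ∀ v : Fin n → E, ∃ N : Submodule R (Fin n → E), N.FG ∧ (∀ x ∈ N, κ x ∈ N) ∧ v ∈ N :=
  stmt6_general p r hp hr R hFF 𝔭 K E htors hlayers n κ hadd hsemi
end

section
/- Let R be a commutative Noetherian ring, let 𝔭 ⊂ R be a prime ideal, let R_𝔭 be the localization of R at 𝔭, and let κ(𝔭) = R_𝔭/𝔭R_𝔭 be the residue field. Let E be an R_𝔭-module which is injective as an R_𝔭-module and which contains an essential R_𝔭-submodule isomorphic to κ(𝔭), via an injective R_𝔭-linear map ι : κ(𝔭) → E (i.e., E is an injective hull of κ(𝔭) over R_𝔭). Then, regarding E as an R-module by restriction of scalars along R → R_𝔭: (a) E is injective as an R-module, and (b) the composite R-linear map R/𝔭 → κ(𝔭) → E is injective and its image is an essential R-submodule of E. In other words, E restricted to R is an injective hull of R/𝔭 over R. -/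
/-!
Every element of `E` is killed by a power of `𝔪 = 𝔭R_𝔭`: for `s ∈ 𝔪` the chain `ann(sⁿx)`
stabilises, and a nonzero element of `R_𝔭 sⁿx` in the essential copy of `κ(𝔭)`, which `s` kills,
would contradict this. Hence an `R_𝔭`-linear map from an ideal `J` into `E` has image killed by
some `𝔪ᵏ`, so by Artin–Rees it vanishes on `J ∩ 𝔪ˡ` and extends along `J/(J ∩ 𝔪ˡ) ↪ R_𝔭/𝔪ˡ`.
This detour is needed because `Module.Injective` only tests modules in the universe of `E`;
`R_𝔭/𝔪ˡ` is small, being an iterated extension of finite-dimensional `κ(𝔭)`-spaces and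
`κ(𝔭) ↪ E`. Baer's criterion over `R` then follows by localizing ideals at `𝔭`, and essentiality
over `R` because the elements of `R ∖ 𝔭` act invertibly on `E`.
-/

universe v

def Submodule.IsEssential {R M : Type*} [Semiring R] [AddCommMonoid M] [Module R M]
    (V : Submodule R M) : Prop :=
  ∀ N : Submodule R M, N ≠ ⊥ → V ⊓ N ≠ ⊥

theorem Submodule.small_of_small_quotient {R M : Type*} [Ring R] [AddCommGroup M] [Module R M]
    (N : Submodule R M) [Small.{v} N] [Small.{v} (M ⧸ N)] : Small.{v} M :=
  have : Small.{v} (M ⧸ N.toAddSubgroup) := ‹Small.{v} (M ⧸ N)›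
  small_of_injective
    (AddSubgroup.addGroupEquivQuotientProdAddSubgroup (s := N.toAddSubgroup)).injective

theorem small_of_pow_smul_top_eq_bot {R : Type*} [CommRing R] [IsNoetherianRing R] (m : Ideal R)
    [Small.{v} (R ⧸ m)] (k : ℕ) (M : Type*) [AddCommGroup M] [Module R M] [Module.Finite R M]
    (hk : m ^ k • (⊤ : Submodule R M) = ⊥) : Small.{v} M := by
  induction k generalizing M with
  | zero =>
    rw [pow_zero, Ideal.one_eq_top, Submodule.top_smul] at hk
    have : Subsingleton M := (Submodule.subsingleton_iff R).mp (subsingleton_of_bot_eq_top hk.symm)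
    infer_instance
  | succ k ih =>
    let N : Submodule R M := m • ⊤
    have : Small.{v} N := ih N <| Submodule.map_injective_of_injective N.injective_subtype <| by
      rw [Submodule.map_smul'', Submodule.map_subtype_top, Submodule.map_bot, ← hk, pow_succ,
        ← Ideal.smul_eq_mul, Submodule.smul_assoc]
    have : Small.{v} (M ⧸ N) := Module.Finite.small (R := R ⧸ m) (M := M ⧸ N)
    exact N.small_of_small_quotient

theorem Module.Injective.exists_extension_of_small {R : Type*} [Ring R] {Q : Type v}
    [AddCommGroup Q] [Module R Q] [Module.Injective R Q] {X Y : Type*} [AddCommGroup X]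
    [AddCommGroup Y] [Module R X] [Module R Y] [Small.{v} X] [Small.{v} Y] (f : X →ₗ[R] Y)
    (hf : Function.Injective f) (g : X →ₗ[R] Q) : ∃ h : Y →ₗ[R] Q, ∀ x, h (f x) = g x := by
  let eX := Shrink.linearEquiv R X
  let eY := Shrink.linearEquiv R Y
  obtain ⟨h, hh⟩ := Module.Injective.out (eY.symm.toLinearMap ∘ₗ f ∘ₗ eX.toLinearMap)
    (eY.symm.injective.comp (hf.comp eX.injective)) (g ∘ₗ eX.toLinearMap)
  exact ⟨h ∘ₗ eY.symm.toLinearMap, fun x ↦ by simpa [eX, eY] using hh (eX.symm x)⟩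

theorem Module.Injective.exists_extension_of_comap_le_ker {S : Type*} [Ring S] {E : Type v}
    [AddCommGroup E] [Module S E] [Module.Injective S E] {J K : Ideal S} [Small.{v} (S ⧸ K)]
    (ψ : J →ₗ[S] E) (hψ : Submodule.comap J.subtype K ≤ LinearMap.ker ψ) :
    ∃ g : S →ₗ[S] E, ∀ (x : S) (hx : x ∈ J), g x = ψ ⟨x, hx⟩ := by
  let u := (Submodule.comap J.subtype K).liftQ (K.mkQ ∘ₗ J.subtype)
    (by rw [LinearMap.ker_comp, Submodule.ker_mkQ])
  have hu : Function.Injective u := by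
    rw [← LinearMap.ker_eq_bot]
    exact Submodule.ker_liftQ_eq_bot' _ _ (by rw [LinearMap.ker_comp, Submodule.ker_mkQ])
  have : Small.{v} (J ⧸ Submodule.comap J.subtype K) := small_of_injective hu
  obtain ⟨h, hh⟩ := exists_extension_of_small u hu ((Submodule.comap J.subtype K).liftQ ψ hψ)
  exact ⟨h ∘ₗ K.mkQ, fun x hx ↦ hh (Submodule.Quotient.mk ⟨x, hx⟩)⟩

section Noetherian

variable {S : Type*} [CommRing S] [IsNoetherianRing S] {E : Type*} [AddCommGroup E] [Module S E]

theorem exists_comap_pow_le_ker_of_pow_le_annihilator {m J : Ideal S} (ψ : J →ₗ[S] E) {k : ℕ}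
    (hk : m ^ k ≤ (LinearMap.range ψ).annihilator) :
    ∃ l, Submodule.comap J.subtype (m ^ l) ≤ LinearMap.ker ψ := by
  obtain ⟨l₀, hAR⟩ := Ideal.exists_pow_inf_eq_pow_smul m J
  refine ⟨l₀ + k, fun j hj ↦ ?_⟩
  have hker : m ^ k • (⊤ : Submodule S J) ≤ LinearMap.ker ψ :=
    Submodule.smul_le.mpr fun r hr n _ ↦ by
      rw [LinearMap.mem_ker, map_smul]
      exact Submodule.mem_annihilator.mp (hk hr) _ (LinearMap.mem_range_self ψ n)
  have hj' : (j : S) ∈ (m ^ k • ⊤ : Submodule S J).map J.subtype := by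
    have hAR := (hAR (l₀ + k) (Nat.le_add_right _ _)).le
    rw [Nat.add_sub_cancel_left] at hAR
    rw [Submodule.map_smul'', Submodule.map_subtype_top]
    refine Submodule.smul_mono le_rfl inf_le_right (hAR ⟨?_, j.2⟩)
    rwa [Ideal.smul_eq_mul, Ideal.mul_top]
  obtain ⟨j', hj', hjj'⟩ := hj'
  rw [← J.injective_subtype hjj']
  exact hker hj'

omit [IsNoetherianRing S] in
theorem Submodule.FG.exists_pow_le_annihilator {P : Submodule S E} (hP : P.FG) {m : Ideal S}
    (h : ∀ x ∈ P, ∃ k, m ^ k ≤ (S ∙ x).annihilator) : ∃ k, m ^ k ≤ P.annihilator := by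
  obtain ⟨F, rfl⟩ := hP
  choose k hk using fun x : F ↦ h x (Submodule.subset_span x.2)
  refine ⟨Finset.univ.sup k, fun _ hs ↦ (Submodule.mem_annihilator_span _ _).mpr fun x ↦ ?_⟩
  exact (Submodule.mem_annihilator_span_singleton _ _).mp
    (hk x (Ideal.pow_le_pow_right (Finset.le_sup (Finset.mem_univ x)) hs))

theorem Submodule.IsEssential.exists_pow_smul_eq_zero {V : Submodule S E} (hV : V.IsEssential)
    {s : S} (hs : s ∈ V.annihilator) (x : E) : ∃ n, s ^ n • x = 0 := by
  let ann : ℕ →o Ideal S := ⟨fun n ↦ (S ∙ s ^ n • x).annihilator,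
    monotone_nat_of_le_succ fun n a ha ↦ by
      rw [Submodule.mem_annihilator_span_singleton] at ha ⊢
      rw [pow_succ', mul_smul, smul_comm a s, ha, smul_zero]⟩
  obtain ⟨n, hn⟩ := monotone_stabilizes_iff_noetherian.mpr inferInstance ann
  refine ⟨n, by_contra fun hx ↦ ?_⟩
  obtain ⟨_, ⟨hyV, hy⟩, hy0⟩ := Submodule.exists_mem_ne_zero_of_ne_bot
    (hV _ ((Submodule.span_singleton_eq_bot).not.mpr hx))
  obtain ⟨t, rfl⟩ := Submodule.mem_span_singleton.mp hy
  have : t ∈ ann (n + 1) := by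
    change t ∈ (S ∙ _).annihilator
    rw [Submodule.mem_annihilator_span_singleton, pow_succ', mul_smul, smul_comm]
    exact Submodule.mem_annihilator.mp hs _ hyV
  rw [← hn (n + 1) n.le_succ] at this
  exact hy0 (Submodule.mem_annihilator_span_singleton _ _ |>.mp this)

theorem Submodule.IsEssential.exists_pow_le_annihilator {V : Submodule S E} (hV : V.IsEssential)
    {m : Ideal S} (hm : m ≤ V.annihilator) (x : E) : ∃ k, m ^ k ≤ (S ∙ x).annihilator :=
  Ideal.exists_pow_le_of_le_radical_of_fg (fun _ hs ↦
    let ⟨n, hn⟩ := hV.exists_pow_smul_eq_zero (hm hs) x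
    ⟨n, (Submodule.mem_annihilator_span_singleton _ _).mpr hn⟩) (IsNoetherian.noetherian m)

theorem Module.Baer.of_pow_le_annihilator {E : Type v} [AddCommGroup E] [Module S E]
    [Module.Injective S E] (m : Ideal S) [Small.{v} (S ⧸ m)]
    (htors : ∀ x : E, ∃ k, m ^ k ≤ (S ∙ x).annihilator) : Module.Baer S E := by
  intro J ψ
  have hfg : (LinearMap.range ψ).FG := LinearMap.range_eq_map ψ ▸ Module.Finite.fg_top.map ψ
  obtain ⟨k, hk⟩ := hfg.exists_pow_le_annihilator fun x _ ↦ htors x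
  obtain ⟨l, hl⟩ := exists_comap_pow_le_ker_of_pow_le_annihilator ψ hk
  have : Small.{v} (S ⧸ m ^ l) := small_of_pow_smul_top_eq_bot m l _ <|
    Submodule.le_annihilator_iff.mp (by rw [Submodule.annihilator_top, Ideal.annihilator_quotient])
  exact Module.Injective.exists_extension_of_comap_le_ker ψ hl

end Noetherian

section Localization

variable {R : Type*} [CommRing R] (M : Submonoid R) {S : Type*} [CommRing S] [Algebra R S]
  [IsLocalization M S] {E : Type*} [AddCommGroup E] [Module R E] [Module S E]
  [IsScalarTower R S E]

include M in
theorem Module.Baer.of_isLocalization (h : Module.Baer S E) : Module.Baer R E := by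
  intro I φ
  let toLoc := I.toLocalized' S M (Algebra.linearMap R S)
  have := isLocalizedModule_id M E S
  have hunit := IsLocalizedModule.map_units (S := M) (LinearMap.id : E →ₗ[R] E)
  let ψ := (IsLocalizedModule.lift M toLoc φ hunit).extendScalarsOfIsLocalization M S
  obtain ⟨g, hg⟩ := h _ ψ
  refine ⟨g.restrictScalars R ∘ₗ Algebra.linearMap R S, fun x hx ↦ ?_⟩
  exact (hg _ _).trans (IsLocalizedModule.lift_apply M toLoc φ hunit ⟨x, hx⟩)

include M in
theorem Submodule.IsEssential.restrictScalars_of_isLocalization {V : Submodule S E}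
    (hV : V.IsEssential) : (V.restrictScalars R).IsEssential := by
  intro N hN
  obtain ⟨x, hxN, hx0⟩ := Submodule.exists_mem_ne_zero_of_ne_bot hN
  obtain ⟨_, ⟨hyV, hy⟩, hy0⟩ := Submodule.exists_mem_ne_zero_of_ne_bot
    (hV _ ((Submodule.span_singleton_eq_bot).not.mpr hx0))
  obtain ⟨c, rfl⟩ := Submodule.mem_span_singleton.mp hy
  obtain ⟨r, s, rfl⟩ := IsLocalization.exists_mk'_eq M c
  have hrx : (s : R) • IsLocalization.mk' S r s • x = r • x := by
    rw [← algebraMap_smul S, smul_smul, IsLocalization.mk'_spec', algebraMap_smul]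
  refine Submodule.ne_bot_iff _ |>.mpr ⟨r • x, ⟨?_, N.smul_mem r hxN⟩, ?_⟩
  · rw [← hrx]
    exact (V.restrictScalars R).smul_mem _ hyV
  · rw [← hrx, ← algebraMap_smul S]
    exact fun h ↦ hy0 ((IsLocalization.map_units S s).smul_eq_zero.mp h)

end Localization

/-- Let `R` be commutative Noetherian, `𝔭` a prime, `R_𝔭` the localization
and `κ(𝔭) = R_𝔭/𝔭R_𝔭`.  If `E` is an injective `R_𝔭`-module containing an essential copy of
`κ(𝔭)` via an injective `R_𝔭`-linear map `ι` (i.e. `E` is an injective hull of `κ(𝔭)` over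
`R_𝔭`), then, restricting scalars along `R → R_𝔭`: (a) `E` is injective as an `R`-module,
and (b) the composite `R/𝔭 → κ(𝔭) → E` is injective with essential image, i.e. `E` is an
injective hull of `R/𝔭` over `R`. -/
theorem stmt7 (R : Type*) [CommRing R] [IsNoetherianRing R]
    (𝔭 : Ideal R) [𝔭.IsPrime]
    (E : Type*) [AddCommGroup E]
    [Module (Localization.AtPrime 𝔭) E] [Module R E]
    [IsScalarTower R (Localization.AtPrime 𝔭) E]
    [Module.Injective (Localization.AtPrime 𝔭) E]
    (ι : (Localization.AtPrime 𝔭 ⧸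
        (𝔭.map (algebraMap R (Localization.AtPrime 𝔭)) :
          Ideal (Localization.AtPrime 𝔭))) →ₗ[Localization.AtPrime 𝔭] E)
    (hι : Function.Injective ι)
    -- the image of `ι` is an essential `R_𝔭`-submodule of `E`:
    (hess : ∀ N : Submodule (Localization.AtPrime 𝔭) E, N ≠ ⊥ →
      LinearMap.range ι ⊓ N ≠ ⊥) :
    -- (a) `E` is injective as an `R`-module
    Module.Injective R E ∧
    -- (b) the composite `R/𝔭 → κ(𝔭) → E` is injective …
    (∀ a : R,
      ι (Submodule.Quotient.mk (algebraMap R (Localization.AtPrime 𝔭) a)) = 0 ↔ a ∈ 𝔭) ∧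
    -- … and its image is an essential `R`-submodule of `E`
    (∀ N : Submodule R E, N ≠ ⊥ → ∃ a : R,
      ι (Submodule.Quotient.mk (algebraMap R (Localization.AtPrime 𝔭) a)) ∈ N ∧
      ι (Submodule.Quotient.mk (algebraMap R (Localization.AtPrime 𝔭) a)) ≠ 0) := by
  have : IsNoetherianRing (Localization.AtPrime 𝔭) :=
    IsLocalization.isNoetherianRing 𝔭.primeCompl _ ‹_›
  have : Small.{u_2} (Localization.AtPrime 𝔭 ⧸ 𝔭.map (algebraMap R (Localization.AtPrime 𝔭))) :=
    small_of_injective hι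
  have hann : 𝔭.map (algebraMap R _) ≤ (LinearMap.range ι).annihilator := by
    refine fun s hs ↦ Submodule.mem_annihilator.mpr ?_
    rintro _ ⟨z, rfl⟩
    rw [← map_smul, Module.mem_annihilator.mp (Ideal.annihilator_quotient.ge hs), map_zero]
  have hbaer := Module.Baer.of_pow_le_annihilator _
    (Submodule.IsEssential.exists_pow_le_annihilator hess hann)
  refine ⟨(hbaer.of_isLocalization 𝔭.primeCompl).injective, fun a ↦ ?_, fun N hN ↦ ?_⟩
  · rw [map_eq_zero_iff _ hι, Submodule.Quotient.mk_eq_zero,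
      Localization.AtPrime.map_eq_maximalIdeal, IsLocalization.AtPrime.to_map_mem_maximal_iff _ 𝔭]
  obtain ⟨_, ⟨⟨z, rfl⟩, hzN⟩, hz0⟩ := Submodule.exists_mem_ne_zero_of_ne_bot
    (Submodule.IsEssential.restrictScalars_of_isLocalization 𝔭.primeCompl
      (V := LinearMap.range ι) hess N hN)
  obtain ⟨w, rfl⟩ := Submodule.Quotient.mk_surjective _ z
  obtain ⟨⟨a, t⟩, hat⟩ := IsLocalization.surj 𝔭.primeCompl w
  have hιa : ι (Submodule.Quotient.mk (algebraMap R _ a)) =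
      (t : R) • ι (Submodule.Quotient.mk w) := by
    rw [← hat, mul_comm, ← smul_eq_mul, Submodule.Quotient.mk_smul, map_smul, algebraMap_smul]
  refine ⟨a, hιa ▸ N.smul_mem _ hzN, ?_⟩
  rw [hιa, ← algebraMap_smul (Localization.AtPrime 𝔭)]
  exact fun h ↦ hz0 ((IsLocalization.map_units _ t).smul_eq_zero.mp h)
end

section
/- Let R be a Noetherian F-finite commutative ring of characteristic p, let q = p^r, let (N, κ) be an r-Cartier module over R, and let M ⊆ N be a Cartier submodule which is ind-coherent. For any r-Cartier module (P, κ_P), write Ind(P) for the set of elements of P contained in some finitely generated Cartier submodule of P (this is a Cartier submodule of P). Then M ⊆ Ind(N), and the quotient map π : N → N/M maps Ind(N) onto Ind(N/M), where N/M carries the induced Cartier structure; i.e., the sequence 0 → M → Ind(N) → Ind(N/M) → 0 is exact. -/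
/-!
Lift generators of a finitely generated Cartier submodule `Q ⊆ N/M` to `y₁, …, yₙ ∈ N`.
By iterated `F`-finiteness every `c ∈ R` is a sum `∑ bⱼ^q eⱼ`, so semilinearity gives
`κ(c yᵢ) = ∑ bⱼ κ(eⱼ yᵢ)`: the span of the `yᵢ` is mapped into the span of the finitely many
`yᵢ` and `κ(eⱼ yᵢ)`. Modulo `M` these lie in `Q`, so each `κ(eⱼ yᵢ)` is a combination of the
`yᵢ` plus an element of `M`, and ind-coherence of `M` puts those finitely many error terms into
a finitely generated Cartier submodule `C`. Then `span(yᵢ) + C` is a finitely generated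
Cartier submodule of `N` mapping onto `Q`.
-/

open Set Submodule

universe u

section PowGenerates

variable {R : Type*} [CommRing R]

/-- `e` generates `R` as a module over its subring of `q`-th powers. -/
def PowGenerates (q : ℕ) {ι : Type*} [Fintype ι] (e : ι → R) : Prop :=
  ∀ x : R, ∃ b : ι → R, x = ∑ i, b i ^ q * e i

theorem PowGenerates.mul {p m q : ℕ} [ExpChar R p] {ι κ : Type*} [Fintype ι] [Fintype κ]
    {e : ι → R} {f : κ → R} (he : PowGenerates (p ^ m) e) (hf : PowGenerates q f) :
    PowGenerates (p ^ m * q) fun ij : ι × κ => f ij.2 ^ p ^ m * e ij.1 := by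
  intro x
  obtain ⟨b, rfl⟩ := he x
  choose c hc using fun i => hf (b i)
  refine ⟨fun ij => c ij.1 ij.2, ?_⟩
  rw [Fintype.sum_prod_type]
  refine Finset.sum_congr rfl fun i _ => ?_
  rw [hc i, sum_pow_char_pow, Finset.sum_mul]
  refine Finset.sum_congr rfl fun j _ => ?_
  rw [mul_pow, pow_mul]
  ring

theorem PowGenerates.exists_pow {p : ℕ} [ExpChar R p] {ι : Type u} [Fintype ι] {e : ι → R}
    (he : PowGenerates p e) (k : ℕ) :
    ∃ (κ : Type u) (_ : Fintype κ) (f : κ → R), PowGenerates (p ^ k) f := by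
  induction k with
  | zero => exact ⟨PUnit, inferInstance, fun _ => 1, fun x => ⟨fun _ => x, by simp⟩⟩
  | succ k ih =>
    obtain ⟨κ, _, f, hf⟩ := ih
    exact ⟨κ × ι, inferInstance, _, pow_succ p k ▸ hf.mul he⟩

end PowGenerates

section Cartier

variable (R : Type*) {N N' : Type*} [CommRing R] [AddCommGroup N] [Module R N]
  [AddCommGroup N'] [Module R N']

def cartierInd (κ : N → N) : Set N :=
  {x | ∃ P : Submodule R N, P.FG ∧ MapsTo κ P P ∧ x ∈ P}

variable {R}

theorem image_cartierInd_subset {κ : N → N} {κ' : N' → N'} (f : N →ₗ[R] N')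
    (hf : ∀ x, κ' (f x) = f (κ x)) : f '' cartierInd R κ ⊆ cartierInd R κ' := by
  rintro _ ⟨x, ⟨P, hPfg, hκP, hxP⟩, rfl⟩
  refine ⟨P.map f, hPfg.map f, ?_, mem_map_of_mem hxP⟩
  rintro _ ⟨y, hyP, rfl⟩
  rw [hf]
  exact mem_map_of_mem (hκP hyP)

theorem mapsTo_sup (κ : N →+ N) {P P' Q : Submodule R N} (hP : MapsTo κ P Q)
    (hP' : MapsTo κ P' Q) : MapsTo κ ↑(P ⊔ P') Q := by
  intro x hx
  obtain ⟨y, hy, z, hz, rfl⟩ := mem_sup.mp hx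
  rw [map_add]
  exact add_mem (hP hy) (hP' hz)

theorem mapsTo_iSup (κ : N →+ N) {ι : Sort*} {P : ι → Submodule R N} {Q : Submodule R N}
    (hP : ∀ i, MapsTo κ (P i) Q) : MapsTo κ ↑(⨆ i, P i) Q := by
  intro x hx
  refine iSup_induction P (motive := fun x => κ x ∈ Q) hx (fun i x hx => hP i hx) ?_ ?_
  · simp
  · intro x y hx hy
    simpa using add_mem hx hy

variable {q : ℕ} {ι : Type*} [Fintype ι] {e : ι → R} (he : PowGenerates q e)
  {κ : N →+ N} (hκ : ∀ (a : R) (x : N), κ (a ^ q • x) = a • κ x)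
include he hκ

theorem map_smul_mem_of_powGenerates {P : Submodule R N} {x : N}
    (hx : ∀ j, κ (e j • x) ∈ P) (c : R) : κ (c • x) ∈ P := by
  obtain ⟨b, rfl⟩ := he c
  simp only [Finset.sum_smul, mul_smul, map_sum, hκ]
  exact sum_mem fun j _ => P.smul_mem _ (hx j)

theorem mapsTo_span_of_powGenerates {n : ℕ} {y : Fin n → N} {P : Submodule R N}
    (hy : ∀ i j, κ (e j • y i) ∈ P) : MapsTo κ ↑(span R (range y)) P := by
  intro x hx
  obtain ⟨c, rfl⟩ := (mem_span_range_iff_exists_fun R).mp hx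
  rw [map_sum]
  exact sum_mem fun i _ => map_smul_mem_of_powGenerates he hκ (hy i) (c i)

variable {M : Submodule R N} (hM : (M : Set N) ⊆ cartierInd R κ)
  {κq : N ⧸ M → N ⧸ M} (hκq : ∀ x, κq (M.mkQ x) = M.mkQ (κ x))
include hM hκq

theorem exists_fg_mapsTo_le_map_mkQ {Q : Submodule R (N ⧸ M)} (hQ : Q.FG)
    (hκQ : MapsTo κq Q Q) : ∃ P : Submodule R N, P.FG ∧ MapsTo κ P P ∧ Q ≤ P.map M.mkQ := by
  obtain ⟨n, g, rfl⟩ := fg_iff_exists_fin_generating_family.mp hQ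
  choose y hy using fun i => M.mkQ_surjective (g i)
  have hmap : (span R (range y)).map M.mkQ = span R (range g) := by
    rw [map_span, ← range_comp, show ⇑M.mkQ ∘ y = g from funext hy]
  have hlift : ∀ ij : Fin n × ι, κ (e ij.2 • y ij.1) ∈ span R (range y) ⊔ M := by
    intro ij
    rw [sup_comm, ← comap_map_mkQ, hmap, mem_comap, ← hκq, map_smul, hy]
    exact hκQ (smul_mem _ _ (subset_span (mem_range_self _)))
  choose u hu m hm hum using fun ij => mem_sup.mp (hlift ij)
  choose C hCfg hκC hmC using fun ij => hM (hm ij)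
  set P := span R (range y) ⊔ ⨆ ij, C ij
  have hκy : MapsTo κ ↑(span R (range y)) P :=
    mapsTo_span_of_powGenerates he hκ fun i j => by
      rw [← hum (i, j)]
      exact add_mem (mem_sup_left (hu _)) (mem_sup_right (mem_iSup_of_mem _ (hmC _)))
  have hκC' : MapsTo κ ↑(⨆ ij, C ij) P := mapsTo_iSup κ fun ij =>
    (hκC ij).mono_right (SetLike.coe_subset_coe.mpr ((le_iSup C ij).trans le_sup_right))
  exact ⟨P, (fg_span (finite_range y)).sup (fg_iSup C hCfg), mapsTo_sup κ hκy hκC',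
    hmap ▸ map_mono le_sup_left⟩

theorem cartierInd_subset_image_mkQ : cartierInd R κq ⊆ M.mkQ '' cartierInd R κ := by
  rintro w ⟨Q, hQfg, hκQ, hwQ⟩
  obtain ⟨P, hPfg, hκP, hQP⟩ := exists_fg_mapsTo_le_map_mkQ he hκ hM hκq hQfg hκQ
  obtain ⟨x, hxP, rfl⟩ := hQP hwQ
  exact ⟨x, ⟨P, hPfg, hκP, hxP⟩, rfl⟩

end Cartier

theorem stmt8_general (p r : ℕ) (hp : p.Prime)
    (R : Type*) [CommRing R] [CharP R p]
    (hFF : ∃ s : Finset R, ∀ x : R, ∃ a : R → R, x = ∑ i ∈ s, a i ^ p * i)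
    (N : Type*) [AddCommGroup N] [Module R N]
    (κ : N → N)
    (hadd : ∀ x y : N, κ (x + y) = κ x + κ y)
    (hsemi : ∀ (a : R) (x : N), κ (a ^ p ^ r • x) = a • κ x)
    (M : Submodule R N)
    -- `M` with the induced Cartier structure is ind-coherent:
    (hMind : ∀ m ∈ M, ∃ P : Submodule R N, P ≤ M ∧ P.FG ∧ (∀ x ∈ P, κ x ∈ P) ∧ m ∈ P)
    -- the induced Cartier structure on the quotient `N / M`:
    (κq : (N ⧸ M) → (N ⧸ M))
    (hκq : ∀ x : N, κq (M.mkQ x) = M.mkQ (κ x)) :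
    -- `M ⊆ Ind(N)`:
    (∀ m ∈ M, ∃ P : Submodule R N, P.FG ∧ (∀ x ∈ P, κ x ∈ P) ∧ m ∈ P) ∧
    -- `π` maps `Ind(N)` into `Ind(N/M)`:
    (∀ x : N, (∃ P : Submodule R N, P.FG ∧ (∀ y ∈ P, κ y ∈ P) ∧ x ∈ P) →
      ∃ Q : Submodule R (N ⧸ M), Q.FG ∧ (∀ z ∈ Q, κq z ∈ Q) ∧ M.mkQ x ∈ Q) ∧
    -- `π` maps `Ind(N)` onto `Ind(N/M)`:
    (∀ w : N ⧸ M, (∃ Q : Submodule R (N ⧸ M), Q.FG ∧ (∀ z ∈ Q, κq z ∈ Q) ∧ w ∈ Q) →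
      ∃ x : N, (∃ P : Submodule R N, P.FG ∧ (∀ y ∈ P, κ y ∈ P) ∧ x ∈ P) ∧ M.mkQ x = w) := by
  have := ExpChar.prime (R := R) hp
  obtain ⟨s, hs⟩ := hFF
  have hFrob : PowGenerates p fun i : s => (i : R) := fun x => by
    obtain ⟨a, rfl⟩ := hs x
    exact ⟨fun i => a i, (Finset.sum_coe_sort s _).symm⟩
  obtain ⟨ι, _, e, he⟩ := hFrob.exists_pow r
  have hM : (M : Set N) ⊆ cartierInd R (AddMonoidHom.mk' κ hadd) := fun m hm =>
    let ⟨P, _, hP⟩ := hMind m hm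
    ⟨P, hP⟩
  exact ⟨hM, fun x hx => image_cartierInd_subset M.mkQ hκq ⟨x, hx, rfl⟩,
    fun w hw => cartierInd_subset_image_mkQ he hsemi hM hκq hw⟩

/-- Let `R` be Noetherian `F`-finite of characteristic `p`, `(N, κ)` an
`r`-Cartier module and `M ⊆ N` an ind-coherent Cartier submodule.  Writing `Ind(P)` for the
set of elements of a Cartier module `P` lying in some finitely generated Cartier submodule,
the sequence `0 → M → Ind(N) → Ind(N/M) → 0` is exact: `M ⊆ Ind(N)`, the projection
`π : N → N/M` maps `Ind(N)` into `Ind(N/M)`, and onto it. -/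
theorem stmt8 (p r : ℕ) (hp : p.Prime) (hr : 1 ≤ r)
    (R : Type*) [CommRing R] [CharP R p] [IsNoetherianRing R]
    (hFF : ∃ s : Finset R, ∀ x : R, ∃ a : R → R, x = ∑ i ∈ s, a i ^ p * i)
    (N : Type*) [AddCommGroup N] [Module R N]
    (κ : N → N)
    (hadd : ∀ x y : N, κ (x + y) = κ x + κ y)
    (hsemi : ∀ (a : R) (x : N), κ (a ^ p ^ r • x) = a • κ x)
    (M : Submodule R N) (hM : ∀ x ∈ M, κ x ∈ M)
    -- `M` with the induced Cartier structure is ind-coherent: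
    (hMind : ∀ m ∈ M, ∃ P : Submodule R N, P ≤ M ∧ P.FG ∧ (∀ x ∈ P, κ x ∈ P) ∧ m ∈ P)
    -- the induced Cartier structure on the quotient `N / M`:
    (κq : (N ⧸ M) → (N ⧸ M))
    (hκq : ∀ x : N, κq (M.mkQ x) = M.mkQ (κ x)) :
    -- `M ⊆ Ind(N)`:
    (∀ m ∈ M, ∃ P : Submodule R N, P.FG ∧ (∀ x ∈ P, κ x ∈ P) ∧ m ∈ P) ∧
    -- `π` maps `Ind(N)` into `Ind(N/M)`:
    (∀ x : N, (∃ P : Submodule R N, P.FG ∧ (∀ y ∈ P, κ y ∈ P) ∧ x ∈ P) →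
      ∃ Q : Submodule R (N ⧸ M), Q.FG ∧ (∀ z ∈ Q, κq z ∈ Q) ∧ M.mkQ x ∈ Q) ∧
    -- `π` maps `Ind(N)` onto `Ind(N/M)`:
    (∀ w : N ⧸ M, (∃ Q : Submodule R (N ⧸ M), Q.FG ∧ (∀ z ∈ Q, κq z ∈ Q) ∧ w ∈ Q) →
      ∃ x : N, (∃ P : Submodule R N, P.FG ∧ (∀ y ∈ P, κ y ∈ P) ∧ x ∈ P) ∧ M.mkQ x = w) :=
  stmt8_general p r hp R hFF N κ hadd hsemi M hMind κq hκq
end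

section
/- Let R be a commutative ring of characteristic p, let q = p^r, and let (M, κ) be an r-Cartier module over R. Then M is a union of nilpotent Cartier submodules (i.e., of Cartier submodules on which some power of κ vanishes) if and only if for every m ∈ M there exists n ≥ 0 such that κ^n(λ • m) = 0 for all λ ∈ R. -/
/-! The Cartier submodule generated by `m` is the additive subgroup generated by all
`κ^[e] (λ • m)`. It is an `R`-submodule because `a • κ^[e] x = κ^[e] (a ^ q ^ e • x)`,
and it is `κ`-stable by construction. If `κ^[n]` kills `R ∙ m`, then it kills each generator
`κ^[e] (λ • m)` since `κ^[n]` commutes with `κ^[e]`, hence, being additive, the whole subgroup. -/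

namespace CartierModule

variable {R M : Type*} [Semiring R] [AddCommGroup M] [Module R M] {q : ℕ}
  (κ : AddMonoid.End M)

theorem iterate_pow_smul (hκ : ∀ (a : R) (x : M), κ (a ^ q • x) = a • κ x) (e : ℕ)
    (a : R) (x : M) : (⇑κ)^[e] (a ^ q ^ e • x) = a • (⇑κ)^[e] x := by
  induction e generalizing a with
  | zero => simp
  | succ e ih => rw [pow_succ', pow_mul, Function.iterate_succ_apply', ih, hκ,
      Function.iterate_succ_apply']

variable (hκ : ∀ (a : R) (x : M), κ (a ^ q • x) = a • κ x)

def cartierClosure (P : Submodule R M) : Submodule R M where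
  __ := AddSubgroup.closure (⋃ e, (⇑κ)^[e] '' P)
  smul_mem' a := by
    suffices AddSubgroup.closure (⋃ e, (⇑κ)^[e] '' P) ≤
        (AddSubgroup.closure (⋃ e, (⇑κ)^[e] '' P)).comap (DistribSMul.toAddMonoidHom M a) from
      fun x hx => this hx
    rw [AddSubgroup.closure_le]
    rintro _ ⟨_, ⟨e, rfl⟩, x, hx, rfl⟩
    refine AddSubgroup.subset_closure (Set.mem_iUnion.2 ⟨e, a ^ q ^ e • x, P.smul_mem _ hx, ?_⟩)
    exact iterate_pow_smul κ hκ e a x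

variable (P : Submodule R M)

theorem le_cartierClosure : P ≤ cartierClosure κ hκ P := fun x hx =>
  AddSubgroup.subset_closure (Set.mem_iUnion.2 ⟨0, x, hx, rfl⟩)

theorem map_mem_cartierClosure {x : M} (hx : x ∈ cartierClosure κ hκ P) :
    κ x ∈ cartierClosure κ hκ P := by
  suffices AddSubgroup.closure (⋃ e, (⇑κ)^[e] '' P) ≤
      (AddSubgroup.closure (⋃ e, (⇑κ)^[e] '' P)).comap κ from this hx
  rw [AddSubgroup.closure_le]
  rintro _ ⟨_, ⟨e, rfl⟩, x, hx, rfl⟩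
  exact AddSubgroup.subset_closure
    (Set.mem_iUnion.2 ⟨e + 1, x, hx, Function.iterate_succ_apply' _ _ _⟩)

theorem iterate_eq_zero_of_mem_cartierClosure {n : ℕ} (hP : ∀ x ∈ P, (⇑κ)^[n] x = 0)
    {x : M} (hx : x ∈ cartierClosure κ hκ P) : (⇑κ)^[n] x = 0 := by
  suffices AddSubgroup.closure (⋃ e, (⇑κ)^[e] '' P) ≤ AddMonoidHom.ker (κ ^ n : M →+ M) from
    this hx
  rw [AddSubgroup.closure_le]
  rintro _ ⟨_, ⟨e, rfl⟩, x, hx, rfl⟩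
  change (⇑(κ ^ n)) _ = 0
  rw [AddMonoid.End.coe_pow, ← Function.Commute.iterate_iterate_self, hP x hx,
    Function.iterate_fixed (map_zero κ)]

end CartierModule

open CartierModule in
theorem stmt9_general (p r : ℕ)
    (R : Type*) [CommRing R]
    (M : Type*) [AddCommGroup M] [Module R M]
    (κ : M → M)
    (hadd : ∀ x y : M, κ (x + y) = κ x + κ y)
    (hsemi : ∀ (a : R) (x : M), κ (a ^ p ^ r • x) = a • κ x) :
    (∀ m : M, ∃ N : Submodule R M,
      (∀ x ∈ N, κ x ∈ N) ∧ (∃ n : ℕ, ∀ x ∈ N, κ^[n] x = 0) ∧ m ∈ N) ↔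
    (∀ m : M, ∃ n : ℕ, ∀ l : R, κ^[n] (l • m) = 0) := by
  refine ⟨fun h m => ?_, fun h m => ?_⟩
  · obtain ⟨N, -, ⟨n, hn⟩, hm⟩ := h m
    exact ⟨n, fun l => hn _ (N.smul_mem l hm)⟩
  · obtain ⟨n, hn⟩ := h m
    let κ' : AddMonoid.End M := AddMonoidHom.mk' κ hadd
    refine ⟨cartierClosure κ' hsemi (R ∙ m), fun x hx => map_mem_cartierClosure κ' hsemi _ hx,
      ⟨n, fun x hx => iterate_eq_zero_of_mem_cartierClosure κ' hsemi _ ?_ hx⟩,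
      le_cartierClosure κ' hsemi _ (Submodule.mem_span_singleton_self m)⟩
    intro x hx
    obtain ⟨l, rfl⟩ := Submodule.mem_span_singleton.1 hx
    exact hn l

/-- For an `r`-Cartier module `(M, κ)` over a commutative ring `R` of
characteristic `p`, `M` is a union of nilpotent Cartier submodules iff for every `m ∈ M`
there is `n ≥ 0` with `κ^[n] (λ • m) = 0` for all `λ ∈ R`. -/
theorem stmt9 (p r : ℕ) (hp : p.Prime) (hr : 1 ≤ r)
    (R : Type*) [CommRing R] [CharP R p]
    (M : Type*) [AddCommGroup M] [Module R M]
    (κ : M → M)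
    (hadd : ∀ x y : M, κ (x + y) = κ x + κ y)
    (hsemi : ∀ (a : R) (x : M), κ (a ^ p ^ r • x) = a • κ x) :
    (∀ m : M, ∃ N : Submodule R M,
      (∀ x ∈ N, κ x ∈ N) ∧ (∃ n : ℕ, ∀ x ∈ N, κ^[n] x = 0) ∧ m ∈ N) ↔
    (∀ m : M, ∃ n : ℕ, ∀ l : R, κ^[n] (l • m) = 0) :=
  stmt9_general p r R M κ hadd hsemi
end

section
/- Let (R, 𝔪) be a commutative Noetherian local ring of characteristic p, let q = p^r, let M be a finitely generated R-module, and let τ : M → M be an additive map with τ(a • x) = a^q • τ(x) for all a ∈ R and x ∈ M (an r-F-module structure). Then the only element x ∈ 𝔪M with τ(x) = x is x = 0; i.e., the F-module (𝔪M, τ|_{𝔪M}) has no nonzero fixed points. -/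
/-!
A map with `τ (a • x) = a ^ q • τ x` sends `I • M` into `I ^ q • M`, hence `I ^ k • M` into
`I ^ (k * q) • M`. So a fixed point lying in `𝔪 M` lies in `𝔪 ^ k • M` for every `k` as soon as
`q ≥ 2`, and Krull's intersection theorem forces it to vanish.
-/

section

variable {R M : Type*} [CommRing R] [AddCommGroup M] [Module R M] {q : ℕ} {τ : M → M}

theorem map_mem_pow_smul_top_of_mem_smul_top (hadd : ∀ x y, τ (x + y) = τ x + τ y)
    (hsemi : ∀ (a : R) x, τ (a • x) = a ^ q • τ x) {I : Ideal R} {x : M}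
    (hx : x ∈ I • (⊤ : Submodule R M)) : τ x ∈ I ^ q • (⊤ : Submodule R M) := by
  refine Submodule.smul_induction_on hx (fun a ha y _ => ?_) fun y z hy hz => ?_
  · exact hsemi a y ▸ Submodule.smul_mem_smul (Ideal.pow_mem_pow ha q) trivial
  · exact hadd y z ▸ Submodule.add_mem _ hy hz

theorem mem_iInf_pow_smul_top_of_map_eq_self (hq : 1 < q) (hadd : ∀ x y, τ (x + y) = τ x + τ y)
    (hsemi : ∀ (a : R) x, τ (a • x) = a ^ q • τ x) {I : Ideal R} {x : M}
    (hx : x ∈ I • (⊤ : Submodule R M)) (hfix : τ x = x) :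
    x ∈ (⨅ k : ℕ, I ^ k • ⊤ : Submodule R M) := by
  have hsucc : ∀ n : ℕ, x ∈ I ^ (n + 1) • (⊤ : Submodule R M) := by
    intro n
    induction n with
    | zero => simpa using hx
    | succ n ih =>
      have hτ := map_mem_pow_smul_top_of_mem_smul_top hadd hsemi ih
      rw [hfix, ← pow_mul] at hτ
      exact Submodule.smul_mono_left (Ideal.pow_le_pow_right (by nlinarith)) hτ
  refine Submodule.mem_iInf _ |>.mpr fun k => ?_
  cases k with
  | zero => simp
  | succ n => exact hsucc n

end

theorem stmt12_general (p r : ℕ) (hp : p.Prime) (hr : 1 ≤ r)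
    (R : Type*) [CommRing R] [IsNoetherianRing R] [IsLocalRing R]
    (M : Type*) [AddCommGroup M] [Module R M] [Module.Finite R M]
    (τ : M → M)
    (hadd : ∀ x y : M, τ (x + y) = τ x + τ y)
    (hsemi : ∀ (a : R) (x : M), τ (a • x) = a ^ p ^ r • τ x) :
    ∀ x ∈ (IsLocalRing.maximalIdeal R) • (⊤ : Submodule R M), τ x = x → x = 0 := by
  intro x hx hfix
  have hq : 1 < p ^ r := Nat.one_lt_pow (by omega) hp.one_lt
  have hx' := mem_iInf_pow_smul_top_of_map_eq_self hq hadd hsemi hx hfix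
  rwa [Ideal.iInf_pow_smul_eq_bot_of_isLocalRing _ (IsLocalRing.maximalIdeal.isMaximal R).ne_top,
    Submodule.mem_bot] at hx'

/-- Let `(R, 𝔪)` be a commutative Noetherian local ring of characteristic
`p`, `M` a finitely generated `R`-module and `τ : M → M` an `r`-F-module structure.  Then
the only fixed point of `τ` lying in `𝔪M` is `0`. -/
theorem stmt12 (p r : ℕ) (hp : p.Prime) (hr : 1 ≤ r)
    (R : Type*) [CommRing R] [IsNoetherianRing R] [IsLocalRing R] [CharP R p]
    (M : Type*) [AddCommGroup M] [Module R M] [Module.Finite R M]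
    (τ : M → M)
    (hadd : ∀ x y : M, τ (x + y) = τ x + τ y)
    (hsemi : ∀ (a : R) (x : M), τ (a • x) = a ^ p ^ r • τ x) :
    ∀ x ∈ (IsLocalRing.maximalIdeal R) • (⊤ : Submodule R M), τ x = x → x = 0 :=
  stmt12_general p r hp hr R M τ hadd hsemi
end

section
/- Let (R, 𝔪) be a Noetherian local F-finite commutative ring of characteristic p, let R̂ denote the 𝔪-adic completion of R, and let c : R → R̂ be the completion map. Then the commutative square of ring homomorphisms whose horizontal arrows are the Frobenius endomorphisms x ↦ x^p of R and of R̂, and whose vertical arrows are c, is a pushout square of commutative rings. Equivalently, writing F_*R for R regarded as an R-module via the Frobenius x ↦ x^p (and F_*R̂ for R̂ regarded as an R̂-module via its Frobenius), the map (F_*R) ⊗_R R̂ → F_*R̂ determined by F_*a ⊗ x ↦ F_*(c(a)·x^p) is well defined and bijective. -/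
/-!
Write `F` for the Frobenius and `F_* R` for `R` viewed as an `R`-algebra through `F`. The square
is a pushout exactly when `R̂ ⊗_R F_* R → F_* R̂`, `y ⊗ a ↦ y ^ p * c a`, is bijective. Since `R`
is F-finite, `F_* R` is a finite module over the Noetherian ring `R`, so `R̂ ⊗_R F_* R` is the
`𝔪`-adic completion of `F_* R`. On the underlying group `R`, that completion is taken along the
ideals `F(𝔪 ^ n) R`, and these are cofinal with the `𝔪 ^ n`: `F(𝔪 ^ n) R ⊆ 𝔪 ^ n` trivially,
and `𝔪 ^ k ⊆ F(𝔪 ^ n) R` for large `k` because `𝔪` lies in the radical of the finitely generated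
ideal `F(𝔪 ^ n) R`. Hence the completion of `F_* R` is `R̂` itself.
-/

open TensorProduct

namespace AdicCompletion

variable {R S M N : Type*} [CommRing R] [CommRing S] [AddCommGroup M] [Module R M]
  [AddCommGroup N] [Module S N] {σ : R →+* S} {I : Ideal R} {J : Ideal S}
  (e : M →ₛₗ[σ] N) (he : ∀ n, I ^ n • ⊤ ≤ (J ^ n • ⊤ : Submodule S N).comap e)

def mapₛₗ : AdicCompletion I M →+ AdicCompletion J N where
  toFun v := ⟨fun n => Submodule.mapQ _ _ e (he n) (v.val n), fun {m n} hmn => by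
    show transitionMap J N hmn (Submodule.mapQ _ _ e (he n) (v.val n)) =
      Submodule.mapQ _ _ e (he m) (v.val m)
    obtain ⟨x, hx⟩ := Submodule.Quotient.mk_surjective _ (v.val n)
    rw [← v.property hmn, ← hx]
    rfl⟩
  map_zero' := ext fun n => _root_.map_zero (Submodule.mapQ _ _ e (he n))
  map_add' u v := ext fun n => _root_.map_add (Submodule.mapQ _ _ e (he n)) (u.val n) (v.val n)

lemma mapₛₗ_val (v : AdicCompletion I M) (n : ℕ) :
    (mapₛₗ e he v).val n = Submodule.mapQ _ _ e (he n) (v.val n) :=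
  rfl

variable {e}

theorem mapₛₗ_injective
    (hcof : ∀ n, ∃ k, (J ^ k • ⊤ : Submodule S N).comap e ≤ I ^ n • ⊤) :
    Function.Injective (mapₛₗ e he) := by
  refine (injective_iff_map_eq_zero _).2 fun v hv => ext fun n => ?_
  obtain ⟨k, hk⟩ := hcof n
  obtain ⟨x, hx⟩ := Submodule.Quotient.mk_surjective _ (v.val (max k n))
  have hex : e x ∈ (J ^ max k n • ⊤ : Submodule S N) := by
    have := congr_arg (fun w : AdicCompletion J N => w.val (max k n)) hv
    simpa [mapₛₗ_val, ← hx, Submodule.Quotient.mk_eq_zero] using this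
  rw [val_zero_apply, ← v.property (le_max_right k n), ← hx]
  exact (Submodule.Quotient.mk_eq_zero _).2
    (hk (Submodule.pow_smul_top_le J N (le_max_left k n) hex))

theorem mapₛₗ_surjective
    (hcof : ∀ n, ∃ k, (J ^ k • ⊤ : Submodule S N).comap e ≤ I ^ n • ⊤)
    (hsurj : Function.Surjective e) :
    Function.Surjective (mapₛₗ e he) := by
  intro w
  choose k hk using hcof
  have hrep L : ∃ x, Submodule.Quotient.mk (e x) = w.val L := by
    obtain ⟨y, hy⟩ := Submodule.Quotient.mk_surjective _ (w.val L)
    obtain ⟨x, rfl⟩ := hsurj y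
    exact ⟨x, hy⟩
  choose r hr using fun n => hrep (max (k n) n)
  have hagree {n L : ℕ} (hL : max (k n) n ≤ L) {x : M}
      (hx : Submodule.Quotient.mk (e x) = w.val L) :
      (Submodule.Quotient.mk x : M ⧸ (I ^ n • ⊤ : Submodule R M)) =
        Submodule.Quotient.mk (r n) := by
    rw [Submodule.Quotient.eq]
    refine hk n (Submodule.pow_smul_top_le J N (le_max_left (k n) n) ?_)
    rw [map_sub, ← Submodule.Quotient.eq, hr, ← w.property hL, ← hx]
    rfl
  refine ⟨⟨fun n => Submodule.Quotient.mk (r n), fun {m n} hmn => ?_⟩, ext fun n => ?_⟩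
  · obtain ⟨x, hx⟩ := hrep (max (max (k m) m) (max (k n) n))
    dsimp only
    rw [← hagree (le_max_left _ _) hx, ← hagree (le_max_right _ _) hx]
    rfl
  · show Submodule.mapQ _ _ e (he n) (Submodule.Quotient.mk (r n)) = w.val n
    rw [← w.property (le_max_right (k n) n), ← hr]
    rfl

end AdicCompletion

/-- `R` as an `R`-algebra through `f`; for `f` the Frobenius this is `F_* R`. -/
def Twist {R : Type*} [CommRing R] (_f : R →+* R) : Type _ := R

namespace Twist

variable {R : Type*} [CommRing R] (f : R →+* R)

instance : CommRing (Twist f) := inferInstanceAs (CommRing R)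

def of : R ≃+* Twist f := RingEquiv.refl R

instance : Algebra R (Twist f) := ((of f).toRingHom.comp f).toAlgebra

lemma smul_of (r x : R) : r • of f x = of f (f r * x) := rfl

def toBase : Twist f →ₛₗ[f] R where
  toFun := (of f).symm
  map_add' := map_add _
  map_smul' _ _ := rfl

lemma toBase_bijective : Function.Bijective (toBase f) := (of f).symm.bijective

lemma smul_top_eq_comap (J : Ideal R) :
    J • (⊤ : Submodule R (Twist f)) = Submodule.comap (toBase f) (J.map f) := by
  rw [Ideal.smul_top_eq_map]
  ext x
  show x ∈ J.map ((of f).toRingHom.comp f) ↔ (of f).symm x ∈ J.map f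
  rw [← Ideal.map_map, RingEquiv.toRingHom_eq_coe, Ideal.map_comap_of_equiv]
  rfl

lemma pow_smul_top_le_comap {I : Ideal R} (hf : I.map f ≤ I) (n : ℕ) :
    I ^ n • (⊤ : Submodule R (Twist f)) ≤ (I ^ n • ⊤ : Submodule R R).comap (toBase f) := by
  rw [smul_top_eq_comap, smul_eq_mul, Ideal.mul_top, Ideal.map_pow]
  exact Submodule.comap_mono (Ideal.pow_right_mono hf n)

lemma mapₛₗ_toBase_bijective {I : Ideal R} (hf : I.map f ≤ I)
    (hcof : ∀ n, ∃ k, I ^ k ≤ (I ^ n).map f) :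
    Function.Bijective (AdicCompletion.mapₛₗ (toBase f) (pow_smul_top_le_comap f hf)) := by
  have hcof' n : ∃ k, (I ^ k • ⊤ : Submodule R R).comap (toBase f) ≤ I ^ n • ⊤ := by
    obtain ⟨k, hk⟩ := hcof n
    refine ⟨k, ?_⟩
    rw [smul_top_eq_comap, smul_eq_mul, Ideal.mul_top]
    exact Submodule.comap_mono hk
  exact ⟨AdicCompletion.mapₛₗ_injective _ hcof',
    AdicCompletion.mapₛₗ_surjective _ hcof' (toBase_bijective f).2⟩

lemma finite_of_forall_eq_sum (s : Finset R) (hs : ∀ x, ∃ a : R → R, x = ∑ i ∈ s, f (a i) * i) :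
    Module.Finite R (Twist f) := by
  classical
  refine ⟨⟨s.image (of f), eq_top_iff.2 fun m _ => ?_⟩⟩
  obtain ⟨a, ha⟩ := hs ((of f).symm m)
  have : m = ∑ i ∈ s, a i • of f i := by
    simp only [smul_of, ← map_sum, ← ha, RingEquiv.apply_symm_apply]
  rw [this, Finset.coe_image]
  exact Submodule.sum_mem _ fun i hi => Submodule.smul_mem _ _ (Submodule.subset_span ⟨i, hi, rfl⟩)

section Pushout

variable {S T : Type*} [CommRing S] [Algebra R S] [CommRing T]

noncomputable def tensorLift (g : S →+* T) (h : R →+* T)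
    (hgh : ∀ x, g (algebraMap R S x) = h (f x)) : S ⊗[R] Twist f →+* T :=
  letI : Algebra R T := (h.comp f).toAlgebra
  (Algebra.TensorProduct.lift { g with commutes' := hgh }
    { h.comp (of f).symm.toRingHom with commutes' := fun _ => rfl }
    (fun _ _ => .all _ _)).toRingHom

lemma tensorLift_tmul (g : S →+* T) (h : R →+* T)
    (hgh : ∀ x, g (algebraMap R S x) = h (f x)) (y : S) (m : Twist f) :
    tensorLift f g h hgh (y ⊗ₜ m) = g y * h ((of f).symm m) := rfl

lemma comp_tensorLift_eq_iff (φ : S →+* S) (hφ : ∀ x, φ (algebraMap R S x) = algebraMap R S (f x))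
    (g : S →+* T) (h : R →+* T) (hgh : ∀ x, g (algebraMap R S x) = h (f x)) (t : S →+* T) :
    t.comp (tensorLift f φ (algebraMap R S) hφ) = tensorLift f g h hgh ↔
      (∀ y, t (φ y) = g y) ∧ ∀ x, t (algebraMap R S x) = h x := by
  constructor
  · intro ht
    have htmul y m := congr($ht (y ⊗ₜ[R] m))
    simp only [RingHom.comp_apply, tensorLift_tmul, map_mul] at htmul
    refine ⟨fun y => ?_, fun x => ?_⟩
    · simpa using htmul y 1
    · simpa using htmul 1 (of f x)
  · rintro ⟨htφ, htc⟩
    refine RingHom.ext fun z => ?_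
    induction z with
    | zero => simp
    | add z z' hz hz' => simp only [map_add, hz, hz']
    | tmul y m => simp [tensorLift_tmul, htφ, htc]

theorem existsUnique_ringHom_of_bijective (φ : S →+* S)
    (hφ : ∀ x, φ (algebraMap R S x) = algebraMap R S (f x))
    (hβ : Function.Bijective (tensorLift f φ (algebraMap R S) hφ))
    (g : S →+* T) (h : R →+* T) (hgh : ∀ x, g (algebraMap R S x) = h (f x)) :
    ∃! t : S →+* T, (∀ y, t (φ y) = g y) ∧ ∀ x, t (algebraMap R S x) = h x := by
  simp_rw [← comp_tensorLift_eq_iff f φ hφ g h hgh]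
  let e := RingEquiv.ofBijective _ hβ
  refine ⟨(tensorLift f g h hgh).comp e.symm.toRingHom, ?_, fun t ht => ?_⟩
  · exact RingHom.ext fun z => congrArg _ (e.symm_apply_apply z)
  · rw [← ht]
    exact RingHom.ext fun y => congrArg t (e.apply_symm_apply y).symm

end Pushout

end Twist

section Frobenius

variable {R : Type*} [CommRing R] (p : ℕ) [ExpChar R p] (I : Ideal R)

lemma Ideal.map_frobenius_le : I.map (frobenius R p) ≤ I :=
  Ideal.map_le_iff_le_comap.2 fun a ha => by
    simpa [frobenius_def] using I.pow_mem_of_mem ha p (expChar_pos R p)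

lemma Ideal.exists_pow_le_map_frobenius [IsNoetherianRing R] (n : ℕ) :
    ∃ k, I ^ k ≤ (I ^ n).map (frobenius R p) := by
  have hrad : I ≤ ((I ^ n).map (frobenius R p)).radical := fun a ha =>
    ⟨n * p, by
      rw [pow_mul, ← frobenius_def p (a ^ n)]
      exact Ideal.mem_map_of_mem _ (Ideal.pow_mem_pow ha n)⟩
  exact Ideal.exists_pow_le_of_le_radical_of_fg hrad (IsNoetherian.noetherian _)

lemma Twist.mapₛₗ_toBase_frobenius_smul_of (y : AdicCompletion I R) (m : Twist (frobenius R p)) :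
    AdicCompletion.mapₛₗ (Twist.toBase (frobenius R p))
        (Twist.pow_smul_top_le_comap (frobenius R p) (I.map_frobenius_le p))
        (y • AdicCompletion.of I (Twist (frobenius R p)) m) =
      y ^ p * algebraMap R (AdicCompletion I R) ((Twist.of (frobenius R p)).symm m) := by
  refine AdicCompletion.ext fun n => ?_
  obtain ⟨z, hz⟩ := Ideal.Quotient.mk_surjective (y.val n)
  have hpow : (y ^ p).val n = y.val n ^ p := rfl
  rw [AdicCompletion.mapₛₗ_val, AdicCompletion.smul_eval, AdicCompletion.val_mul, hpow, ← hz]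
  show Submodule.Quotient.mk (Twist.toBase _ (z • m)) =
    Ideal.Quotient.mk _ z ^ p * Ideal.Quotient.mk _ _
  rw [← map_pow, ← map_mul, map_smulₛₗ, frobenius_def, smul_eq_mul]
  rfl

theorem Twist.tensorLift_frobenius_bijective [IsNoetherianRing R]
    [ExpChar (AdicCompletion I R) p] [Module.Finite R (Twist (frobenius R p))] :
    Function.Bijective (Twist.tensorLift (frobenius R p) (frobenius (AdicCompletion I R) p)
      (algebraMap R (AdicCompletion I R)) fun x => ((algebraMap R _).map_frobenius p x).symm) := by
  convert (Twist.mapₛₗ_toBase_bijective _ (I.map_frobenius_le p)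
    (I.exists_pow_le_map_frobenius p)).comp
    (AdicCompletion.ofTensorProduct_bijective_of_finite_of_isNoetherian I (Twist (frobenius R p)))
    using 1
  funext z
  induction z with
  | zero => simp
  | add z z' hz hz' => simp only [map_add, hz, hz', Function.comp_apply]
  | tmul y m =>
    simp only [Function.comp_apply, AdicCompletion.ofTensorProduct_tmul,
      Twist.mapₛₗ_toBase_frobenius_smul_of, Twist.tensorLift_tmul, frobenius_def]

end Frobenius

/-- Let `(R, 𝔪)` be a Noetherian local `F`-finite commutative ring of
characteristic `p` and `R̂` its `𝔪`-adic completion, with completion map `c : R → R̂`.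
The square whose horizontal arrows are the Frobenius endomorphisms `x ↦ x^p` of `R` and
of `R̂` and whose vertical arrows are `c` is a pushout square of commutative rings:
for every commutative ring `T` and ring homomorphisms `g : R̂ → T`, `h : R → T` with
`g ∘ c = h ∘ F` there is a unique ring homomorphism `t : R̂ → T` with `t ∘ F = g` and
`t ∘ c = h`. -/
theorem stmt13 (p : ℕ) (hp : p.Prime)
    (R : Type*) [CommRing R] [IsNoetherianRing R] [IsLocalRing R] [CharP R p]
    (hFF : ∃ s : Finset R, ∀ x : R, ∃ a : R → R, x = ∑ i ∈ s, a i ^ p * i)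
    (T : Type*) [CommRing T]
    (g : AdicCompletion (IsLocalRing.maximalIdeal R) R →+* T)
    (h : R →+* T)
    (hcomm : ∀ x : R,
      g (algebraMap R (AdicCompletion (IsLocalRing.maximalIdeal R) R) x) = h (x ^ p)) :
    ∃! t : AdicCompletion (IsLocalRing.maximalIdeal R) R →+* T,
      (∀ y : AdicCompletion (IsLocalRing.maximalIdeal R) R, t (y ^ p) = g y) ∧
      (∀ x : R,
        t (algebraMap R (AdicCompletion (IsLocalRing.maximalIdeal R) R) x) = h x) := by
  have : ExpChar R p := .prime hp
  -- Krull's intersection theorem makes `R → R̂` injective, so `R̂` has characteristic `p` too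
  have : ExpChar (AdicCompletion (IsLocalRing.maximalIdeal R) R) p :=
    expChar_of_injective_algebraMap (AdicCompletion.of_injective _ R) p
  obtain ⟨s, hs⟩ := hFF
  have : Module.Finite R (Twist (frobenius R p)) :=
    Twist.finite_of_forall_eq_sum _ s (by simpa only [frobenius_def] using hs)
  simpa only [frobenius_def] using Twist.existsUnique_ringHom_of_bijective _ _ _
    (Twist.tensorLift_frobenius_bijective p _) g h (by simpa only [frobenius_def] using hcomm)
end

section
/- Let S be a commutative ring of characteristic p and let z_1, …, z_n ∈ S be elements such that the monomials z^a = z_1^{a_1}⋯z_n^{a_n}, for a ranging over {0, 1, …, p−1}^n, form a basis of S regarded as a module over itself via the Frobenius x ↦ x^p; that is, every s ∈ S can be written uniquely as s = ∑_a b_a^p z^a with b_a ∈ S. Let κ : S → S be the additive map defined by κ(∑_a b_a^p z^a) = b_{(p−1, …, p−1)}. Then the map sending m ∈ S to the function s ↦ κ(s·m) is a bijection from S onto the set of all additive maps φ : S → S satisfying φ(b^p s) = b·φ(s) for all b, s ∈ S. (This is the key computation showing that such an S carries a unit Cartier module structure, i.e., F^!S ≅ S.) -/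
/-!
Every `s` is `∑_a b_a^p z^a` and `κ` is `p⁻¹`-linear, so `κ (s * m)` is determined by
the values `κ (z^a * m)`. The monomials `z^{rev a}`, with `(rev a)_i = p - 1 - a_i`, are
dual to the `z^a` under `(x, y) ↦ κ (x * y)`: reducing the exponents of `z^c z^{rev a}`
modulo `p` gives `(p - 1, …, p - 1)` exactly when `c = a`. Hence `m` is recovered from its
coefficients `κ (m * z^{rev a})`, and a given `φ` is `κ (· * m)` for
`m = ∑_a φ(z^a)^p z^{rev a}`.
-/

open Finset

section FrobeniusBasis

variable {S A : Type*} [CommRing S] [Fintype A] {p : ℕ} {e : A → S}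

theorem map_sum_pow_mul_of_semilinear {φ : S →+ S} (hφ : ∀ b s, φ (b ^ p * s) = b * φ s)
    (b : A → S) : φ (∑ a, b a ^ p * e a) = ∑ a, b a * φ (e a) := by
  simp only [map_sum, hφ]

theorem semilinear_of_map_sum_eq_coeff (hspan : ∀ s, ∃ b : A → S, s = ∑ a, b a ^ p * e a)
    {κ : S →+ S} {a₀ : A} (hκ : ∀ b : A → S, κ (∑ a, b a ^ p * e a) = b a₀)
    (b t : S) :
    κ (b ^ p * t) = b * κ t := by
  obtain ⟨c, rfl⟩ := hspan t
  have hmul : b ^ p * ∑ a, c a ^ p * e a = ∑ a, (b * c a) ^ p * e a := by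
    simp only [mul_sum, mul_pow, mul_assoc]
  rw [hmul, hκ, hκ]

theorem map_pow_mul_eq_ite [DecidableEq A] (hp : p ≠ 0) {κ : S →+ S} {a₀ : A}
    (hκ : ∀ b : A → S, κ (∑ a, b a ^ p * e a) = b a₀) (u : S) (a : A) :
    κ (u ^ p * e a) = if a = a₀ then u else 0 := by
  have hsingle : ∑ c, (Pi.single a u : A → S) c ^ p * e c = u ^ p * e a := by
    rw [Fintype.sum_eq_single a fun c hc => by simp [hc, zero_pow hp]]
    simp
  rw [← hsingle, hκ, Pi.single_apply]
  exact if_congr eq_comm rfl rfl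

variable [DecidableEq A] {e' : A → S} {κ : S →+ S}
  (hdual : ∀ u c a, κ (u ^ p * e c * e' a) = if c = a then u else 0)
include hdual

theorem map_sum_pow_mul_mul_dual (b : A → S) (a : A) :
    κ ((∑ c, b c ^ p * e c) * e' a) = b a := by
  simp only [sum_mul, map_sum, hdual, Fintype.sum_ite_eq']

theorem eq_of_map_mul_eq_map_mul (hspan : ∀ s, ∃ b : A → S, s = ∑ a, b a ^ p * e a)
    {m m' : S} (h : ∀ s, κ (s * m) = κ (s * m')) : m = m' := by
  obtain ⟨b, rfl⟩ := hspan m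
  obtain ⟨b', rfl⟩ := hspan m'
  have hcoeff : b = b' := funext fun a => by
    rw [← map_sum_pow_mul_mul_dual hdual b a, ← map_sum_pow_mul_mul_dual hdual b' a,
      mul_comm, h, mul_comm]
  rw [hcoeff]

theorem eq_map_mul_sum_pow_mul_dual (hspan : ∀ s, ∃ b : A → S, s = ∑ a, b a ^ p * e a)
    (hκ : ∀ b t, κ (b ^ p * t) = b * κ t) {φ : S →+ S}
    (hφ : ∀ b s, φ (b ^ p * s) = b * φ s)
    (s : S) : φ s = κ (s * ∑ a, φ (e a) ^ p * e' a) := by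
  set m := ∑ a, φ (e a) ^ p * e' a
  have hm : ∀ c, κ (e c * m) = φ (e c) := fun c => by
    simp only [m, mul_sum, map_sum, mul_left_comm (e c), ← mul_assoc, hdual, Fintype.sum_ite_eq]
  obtain ⟨b, rfl⟩ := hspan s
  simp only [map_sum_pow_mul_of_semilinear hφ, sum_mul, mul_assoc, map_sum, hκ, hm]

end FrobeniusBasis

section Monomials

theorem prod_pow_eq_pow_mul_prod_pow_mod {ι M : Type*} [Fintype ι] [CommMonoid M] (z : ι → M)
    (f : ι → ℕ) (p : ℕ) :
    ∏ i, z i ^ f i = (∏ i, z i ^ (f i / p)) ^ p * ∏ i, z i ^ (f i % p) := by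
  rw [← prod_pow, ← prod_mul_distrib]
  refine prod_congr rfl fun i _ => ?_
  rw [← pow_mul, ← pow_add, Nat.div_add_mod']

theorem Fin.val_add_val_rev_mod_eq_iff {p : ℕ} (c a : Fin p) :
    ((c : ℕ) + a.rev) % p = p - 1 ↔ c = a := by
  rw [Fin.val_rev, Fin.ext_iff]
  rcases lt_or_ge ((c : ℕ) + (p - (a + 1))) p with h | h
  · rw [Nat.mod_eq_of_lt h]; omega
  · rw [Nat.mod_eq_sub_mod h, Nat.mod_eq_of_lt (by omega)]; omega

variable {S : Type*} [CommRing S] {p n : ℕ} [NeZero p] {z : Fin n → S}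

theorem map_pow_mul_monomial_mul_monomial_rev {κ : S →+ S} {a₀ : Fin n → Fin p}
    (htop : ∀ i, (a₀ i : ℕ) = p - 1)
    (hκ : ∀ u r, κ (u ^ p * ∏ i, z i ^ (r i : ℕ)) = if r = a₀ then u else 0)
    (u : S) (c a : Fin n → Fin p) :
    κ (u ^ p * (∏ i, z i ^ (c i : ℕ)) * ∏ i, z i ^ ((a i).rev : ℕ)) =
      if c = a then u else 0 := by
  set f : Fin n → ℕ := fun i => c i + (a i).rev
  let r : Fin n → Fin p := fun i => ⟨f i % p, Nat.mod_lt _ p.pos_of_neZero⟩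
  have hreduce : u ^ p * (∏ i, z i ^ (c i : ℕ)) * ∏ i, z i ^ ((a i).rev : ℕ) =
      (u * ∏ i, z i ^ (f i / p)) ^ p * ∏ i, z i ^ (r i : ℕ) := by
    have hf : (∏ i, z i ^ (c i : ℕ)) * ∏ i, z i ^ ((a i).rev : ℕ) = ∏ i, z i ^ f i := by
      simp only [f, pow_add, prod_mul_distrib]
    rw [mul_assoc, hf, prod_pow_eq_pow_mul_prod_pow_mod z f p]
    ring
  have hr : r = a₀ ↔ c = a := by
    simp only [r, funext_iff, Fin.ext_iff, htop, f, Fin.val_add_val_rev_mod_eq_iff]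
  rw [hreduce, hκ, if_congr hr rfl rfl]
  split_ifs with hca
  · have hdiv : ∀ i, f i / p = 0 := fun i => Nat.div_eq_of_lt <| by
      simp only [f, hca, Fin.val_rev]
      omega
    simp only [hdiv, pow_zero, prod_const_one, mul_one]
  · rfl

end Monomials

theorem stmt14_general (p : ℕ) (hp : p.Prime)
    (S : Type*) [CommRing S]
    (n : ℕ) (z : Fin n → S)
    -- the monomials `z^a`, `a ∈ {0, …, p-1}ⁿ`, form a Frobenius basis of `S`:
    (hbasis : ∀ s : S, ∃! b : (Fin n → Fin p) → S,
      s = ∑ a : Fin n → Fin p, b a ^ p * ∏ i : Fin n, z i ^ (a i : ℕ))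
    -- the additive map `κ` sending `∑_a b_a^p z^a` to `b_{(p-1,…,p-1)}`:
    (κ : S → S)
    (hκadd : ∀ x y : S, κ (x + y) = κ x + κ y)
    (hκ : ∀ b : (Fin n → Fin p) → S,
      κ (∑ a : Fin n → Fin p, b a ^ p * ∏ i : Fin n, z i ^ (a i : ℕ)) =
        b (fun _ => (⟨p - 1, Nat.sub_lt hp.pos Nat.one_pos⟩ : Fin p))) :
    -- `m ↦ (s ↦ κ (s * m))` lands in the set of additive `p⁻¹`-linear maps …
    (∀ m : S, (∀ x y : S, κ ((x + y) * m) = κ (x * m) + κ (y * m)) ∧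
      (∀ b s : S, κ (b ^ p * s * m) = b * κ (s * m))) ∧
    -- … is injective …
    (∀ m m' : S, (∀ s : S, κ (s * m) = κ (s * m')) → m = m') ∧
    -- … and surjective onto that set:
    (∀ φ : S → S, (∀ x y : S, φ (x + y) = φ x + φ y) →
      (∀ b s : S, φ (b ^ p * s) = b * φ s) →
      ∃ m : S, ∀ s : S, φ s = κ (s * m)) := by
  have : NeZero p := ⟨hp.ne_zero⟩
  let K : S →+ S := AddMonoidHom.mk' κ hκadd
  have hspan s := (hbasis s).exists
  have hK : ∀ b t, K (b ^ p * t) = b * K t := semilinear_of_map_sum_eq_coeff hspan (κ := K) hκ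
  have hdual := map_pow_mul_monomial_mul_monomial_rev (κ := K) (fun _ => rfl)
    (map_pow_mul_eq_ite hp.ne_zero (κ := K) hκ)
  refine ⟨fun m => ⟨fun x y => ?_, fun b s => ?_⟩, fun m m' h => ?_, fun φ hadd hφ => ?_⟩
  · rw [add_mul, hκadd]
  · rw [mul_assoc]
    exact hK b _
  · exact eq_of_map_mul_eq_map_mul hdual hspan (κ := K) h
  · exact ⟨_, eq_map_mul_sum_pow_mul_dual hdual hspan hK (φ := AddMonoidHom.mk' φ hadd) hφ⟩

/-- Let `S` be a commutative ring of characteristic `p` and `z₁, …, zₙ ∈ S`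
such that the monomials `z^a`, `a ∈ {0, …, p-1}ⁿ`, form a basis of `S` over itself via
Frobenius: every `s ∈ S` is uniquely `∑_a b_a^p z^a`.  Let `κ : S → S` be the additive map
with `κ (∑_a b_a^p z^a) = b_{(p-1,…,p-1)}`.  Then `m ↦ (s ↦ κ (s * m))` is a bijection from
`S` onto the set of additive maps `φ : S → S` with `φ (b^p * s) = b * φ s`, i.e. `F^! S ≅ S`. -/
theorem stmt14 (p : ℕ) (hp : p.Prime)
    (S : Type*) [CommRing S] [CharP S p]
    (n : ℕ) (z : Fin n → S)
    -- the monomials `z^a`, `a ∈ {0, …, p-1}ⁿ`, form a Frobenius basis of `S`: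
    (hbasis : ∀ s : S, ∃! b : (Fin n → Fin p) → S,
      s = ∑ a : Fin n → Fin p, b a ^ p * ∏ i : Fin n, z i ^ (a i : ℕ))
    -- the additive map `κ` sending `∑_a b_a^p z^a` to `b_{(p-1,…,p-1)}`:
    (κ : S → S)
    (hκadd : ∀ x y : S, κ (x + y) = κ x + κ y)
    (hκ : ∀ b : (Fin n → Fin p) → S,
      κ (∑ a : Fin n → Fin p, b a ^ p * ∏ i : Fin n, z i ^ (a i : ℕ)) =
        b (fun _ => (⟨p - 1, Nat.sub_lt hp.pos Nat.one_pos⟩ : Fin p))) :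
    -- `m ↦ (s ↦ κ (s * m))` lands in the set of additive `p⁻¹`-linear maps …
    (∀ m : S, (∀ x y : S, κ ((x + y) * m) = κ (x * m) + κ (y * m)) ∧
      (∀ b s : S, κ (b ^ p * s * m) = b * κ (s * m))) ∧
    -- … is injective …
    (∀ m m' : S, (∀ s : S, κ (s * m) = κ (s * m')) → m = m') ∧
    -- … and surjective onto that set:
    (∀ φ : S → S, (∀ x y : S, φ (x + y) = φ x + φ y) →
      (∀ b s : S, φ (b ^ p * s) = b * φ s) →
      ∃ m : S, ∀ s : S, φ s = κ (s * m)) :=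
  stmt14_general p hp S n z hbasis κ hκadd hκ
end

section
/- Let k be an algebraically closed field of characteristic p and let q = p^r for some r ≥ 1. Then the quotient of the additive group of the polynomial ring k[t] by the subgroup {f^q − f : f ∈ k[t]} is infinite. (Consequently, the Artin–Schreier cokernel H^1(𝔸^1_{k,ét}, 𝔽_q) = coker(F − 1 : k[t] → k[t]) is an infinite-dimensional 𝔽_q-vector space.) -/
/-!
Over a domain, `f ^ q - f` is constant or has degree `q * deg f`, so every element of the
Artin–Schreier image has degree divisible by `q`. The polynomials `X ^ (q * n + 1)` therefore
lie in pairwise distinct cosets: the difference of two of them has degree `≡ 1 mod q`.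
-/

open Polynomial

theorem Polynomial.dvd_natDegree_pow_sub_self {R : Type*} [Ring R] [NoZeroDivisors R] {q : ℕ}
    (hq : 1 < q) (f : R[X]) : q ∣ (f ^ q - f).natDegree := by
  rcases Nat.eq_zero_or_pos f.natDegree with hf | hf
  · have : (f ^ q - f).natDegree = 0 :=
      Nat.le_zero.mp <| (natDegree_sub_le _ _).trans (by simp [natDegree_pow, hf])
    simp [this]
  · have hlt : f.natDegree < (f ^ q).natDegree := by
      rw [natDegree_pow]
      exact lt_mul_left hf hq
    rw [natDegree_sub_eq_left_of_natDegree_lt hlt, natDegree_pow]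
    exact dvd_mul_right q _

theorem Polynomial.natDegree_X_pow_sub_X_pow {R : Type*} [Ring R] [Nontrivial R] {m n : ℕ}
    (h : n < m) : ((X : R[X]) ^ m - X ^ n).natDegree = m := by
  rw [natDegree_sub_eq_left_of_natDegree_lt] <;> simp [h]

theorem Polynomial.infinite_quotient_of_dvd_natDegree {R : Type*} [Ring R] [Nontrivial R]
    (H : AddSubgroup R[X]) {q : ℕ} (hq : 1 < q) (hH : ∀ x ∈ H, q ∣ x.natDegree) :
    Infinite (R[X] ⧸ H) := by
  refine Infinite.of_injective (fun n : ℕ ↦ QuotientAddGroup.mk (s := H) (X ^ (q * n + 1)))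
    fun m n hmn ↦ ?_
  by_contra hne
  wlog hlt : n < m generalizing m n
  · exact this n m hmn.symm (Ne.symm hne) (by omega)
  have hdvd := hH _ (QuotientAddGroup.eq_iff_sub_mem.mp hmn)
  rw [natDegree_X_pow_sub_X_pow (by gcongr)] at hdvd
  have := Nat.le_of_dvd one_pos <| (Nat.dvd_add_right (dvd_mul_right q m)).mp hdvd
  omega

theorem stmt15_general (p r : ℕ) (hp : p.Prime) (hr : 1 ≤ r)
    (k : Type*) [Field k]
    (H : AddSubgroup (Polynomial k))
    (hH : ∀ x : Polynomial k, x ∈ H ↔ ∃ f : Polynomial k, f ^ p ^ r - f = x) :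
    Infinite (Polynomial k ⧸ H) := by
  have hq : 1 < p ^ r := Nat.one_lt_pow (by omega) hp.one_lt
  refine infinite_quotient_of_dvd_natDegree H hq fun x hx ↦ ?_
  obtain ⟨f, rfl⟩ := (hH x).mp hx
  exact dvd_natDegree_pow_sub_self hq f

/-- Let `k` be an algebraically closed field of characteristic `p` and
`q = p^r`, `r ≥ 1`.  The quotient of the additive group of `k[t]` by the subgroup
`{f^q − f : f ∈ k[t]}` is infinite (the Artin–Schreier cokernel
`H¹(𝔸¹_{k,ét}, 𝔽_q) = coker (F − 1 : k[t] → k[t])` is infinite-dimensional over `𝔽_q`). -/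
theorem stmt15 (p r : ℕ) (hp : p.Prime) (hr : 1 ≤ r)
    (k : Type*) [Field k] [IsAlgClosed k] [CharP k p]
    (H : AddSubgroup (Polynomial k))
    (hH : ∀ x : Polynomial k, x ∈ H ↔ ∃ f : Polynomial k, f ^ p ^ r - f = x) :
    Infinite (Polynomial k ⧸ H) :=
  stmt15_general p r hp hr k H hH
end
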